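/- arXiv:1712.09940 — 12 statements merged into one kernel-verified Lean document; each statement's English description precedes it below -/
import Mathlib

section
/- Let μ be a p×q interval matrix. Then rkRange(μ) = [mrk(μ), Mrk(μ)] ∩ ℕ; that is, for every natural number r with mrk(μ) ≤ r ≤ Mrk(μ) there exists a matrix A ∈ μ with rank(A) = r. -/
/-!
Changing a single entry of a matrix adds a rank-one matrix, so it changes the rank by at most one.
Walking from a matrix of minimal rank in `μ` to one of maximal rank, one entry at a time, stays
inside the box `μ` and therefore passes through every intermediate rank.
-/

namespace Matrix

theorem rank_single_le_one {m n R : Type*} [Fintype n] [DecidableEq m] [DecidableEq n]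
    [CommSemiring R] [StrongRankCondition R] (i : m) (j : n) (c : R) :
    (single i j c).rank ≤ 1 := by
  refine (rank_le_card_of_support_subset _ {i} fun i' hi' => ?_).trans_eq (Finset.card_singleton i)
  by_contra hne
  exact hi' (funext fun j' => single_apply_of_row_ne (Ne.symm (by simpa using hne)) j j' c)

section Piecewise

variable {m n α : Type*} [DecidableEq m] [DecidableEq n]

def piecewise (s : Finset (m × n)) (B A : Matrix m n α) : Matrix m n α :=
  of fun i j => if (i, j) ∈ s then B i j else A i j

@[simp]
theorem piecewise_empty (B A : Matrix m n α) : piecewise ∅ B A = A := by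
  ext; simp [piecewise]

@[simp]
theorem piecewise_univ [Fintype m] [Fintype n] (B A : Matrix m n α) :
    piecewise Finset.univ B A = B := by
  ext; simp [piecewise]

end Piecewise

variable {m n K : Type*} [Fintype n] [Field K]

theorem rank_add_le (A B : Matrix m n K) : (A + B).rank ≤ A.rank + B.rank := by
  have hrange : LinearMap.range (A + B).mulVecLin ≤
      LinearMap.range A.mulVecLin ⊔ LinearMap.range B.mulVecLin := by
    rintro _ ⟨v, rfl⟩
    rw [mulVecLin_add]
    exact Submodule.add_mem_sup ⟨v, rfl⟩ ⟨v, rfl⟩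
  exact (Submodule.finrank_mono hrange).trans (Submodule.finrank_add_le_finrank_add_finrank _ _)

theorem rank_le_rank_add_one_of_eq_off [DecidableEq m] [DecidableEq n] {A B : Matrix m n K}
    (i : m) (j : n) (h : ∀ i' j', (i', j') ≠ (i, j) → B i' j' = A i' j') :
    B.rank ≤ A.rank + 1 := by
  have hB : B = A + single i j (B i j - A i j) := by
    ext i' j'
    by_cases hij : (i', j') = (i, j)
    · obtain ⟨rfl, rfl⟩ := Prod.ext_iff.mp hij
      simp
    · rw [add_apply, single_apply_of_ne (h := fun ⟨hi, hj⟩ => hij (by rw [hi, hj])), add_zero,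
        h i' j' hij]
  rw [hB]
  exact (rank_add_le _ _).trans (Nat.add_le_add_left (rank_single_le_one _ _ _) _)

theorem exists_subset_rank_piecewise_eq [DecidableEq m] [DecidableEq n] {A B : Matrix m n K}
    {r : ℕ} (hA : A.rank ≤ r) (s : Finset (m × n)) (hs : r ≤ (piecewise s B A).rank) :
    ∃ t ⊆ s, (piecewise t B A).rank = r := by
  induction s using Finset.induction_on with
  | empty => exact ⟨∅, subset_rfl, le_antisymm (by simpa using hA) hs⟩
  | insert x s hx ih =>
    by_cases hr : r ≤ (piecewise s B A).rank
    · obtain ⟨t, hts, ht⟩ := ih hr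
      exact ⟨t, hts.trans (Finset.subset_insert x s), ht⟩
    · have hstep : (piecewise (insert x s) B A).rank ≤ (piecewise s B A).rank + 1 :=
        rank_le_rank_add_one_of_eq_off x.1 x.2 fun i j hij => by
          simp [piecewise, hij]
      exact ⟨insert x s, subset_rfl, by omega⟩

theorem exists_rank_eq_of_rank_le_of_le_rank [Fintype m] {A B : Matrix m n K} {r : ℕ}
    (hA : A.rank ≤ r) (hB : r ≤ B.rank) :
    ∃ C : Matrix m n K, (∀ i j, C i j = A i j ∨ C i j = B i j) ∧ C.rank = r := by
  classical
  obtain ⟨t, -, ht⟩ := exists_subset_rank_piecewise_eq hA Finset.univ (by simpa using hB)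
  refine ⟨piecewise t B A, fun i j => ?_, ht⟩
  by_cases hij : (i, j) ∈ t <;> simp [piecewise, hij]

end Matrix

/-- For a p×q interval matrix μ (given by bound matrices m ≤ M),
the set of ranks of matrices contained in μ equals the interval
[mrk(μ), Mrk(μ)] ∩ ℕ. -/
theorem rkRange_eq_Icc (p q : ℕ) (m M : Matrix (Fin p) (Fin q) ℝ)
    (hle : ∀ i j, m i j ≤ M i j) :
    {r : ℕ | ∃ A : Matrix (Fin p) (Fin q) ℝ,
        (∀ i j, A i j ∈ Set.Icc (m i j) (M i j)) ∧ A.rank = r} =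
      Set.Icc
        (sInf {r : ℕ | ∃ A : Matrix (Fin p) (Fin q) ℝ,
          (∀ i j, A i j ∈ Set.Icc (m i j) (M i j)) ∧ A.rank = r})
        (sSup {r : ℕ | ∃ A : Matrix (Fin p) (Fin q) ℝ,
          (∀ i j, A i j ∈ Set.Icc (m i j) (M i j)) ∧ A.rank = r}) := by
  set S := {r : ℕ | ∃ A : Matrix (Fin p) (Fin q) ℝ,
      (∀ i j, A i j ∈ Set.Icc (m i j) (M i j)) ∧ A.rank = r}
  have hne : S.Nonempty := ⟨m.rank, m, fun i j => ⟨le_rfl, hle i j⟩, rfl⟩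
  have hbdd : BddAbove S := ⟨q, by rintro _ ⟨A, -, rfl⟩; exact A.rank_le_width⟩
  ext r
  constructor
  · rintro ⟨A, hA, rfl⟩
    exact ⟨Nat.sInf_le ⟨A, hA, rfl⟩, le_csSup hbdd ⟨A, hA, rfl⟩⟩
  · rintro ⟨hmin, hmax⟩
    obtain ⟨A, hA, hrA⟩ := Nat.sInf_mem hne
    obtain ⟨B, hB, hrB⟩ := Nat.sSup_mem hne hbdd
    obtain ⟨C, hC, hrC⟩ :=
      Matrix.exists_rank_eq_of_rank_le_of_le_rank (hrA ▸ hmin) (hrB ▸ hmax)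
    refine ⟨C, fun i j => ?_, hrC⟩
    rcases hC i j with h | h <;> rw [h]
    exacts [hA i j, hB i j]
end

section
/- Let μ be a p×q interval matrix, let (i₀,j₀) be a fixed position with m_{i₀,j₀} ≤ 0 ≤ M_{i₀,j₀}, and let μ' and μ'' be the interval matrices that agree with μ at every position except (i₀,j₀), where μ'_{i₀,j₀} = [m_{i₀,j₀}, 0] and μ''_{i₀,j₀} = [0, M_{i₀,j₀}]. Then for every natural number r, there exists A ∈ μ with rank(A) = r if and only if either there exists A ∈ μ' with rank(A) = r or there exists A ∈ μ'' with rank(A) = r. -/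
/-- Splitting one entry interval [m,M] (containing 0) into [m,0] and [0,M]:
μ contains a matrix of rank r iff μ' or μ'' does. -/
theorem rank_r_split_entry (p q : ℕ) (m M : Matrix (Fin p) (Fin q) ℝ)
    (hle : ∀ i j, m i j ≤ M i j)
    (i₀ : Fin p) (j₀ : Fin q)
    (h0 : m i₀ j₀ ≤ 0 ∧ 0 ≤ M i₀ j₀) (r : ℕ) :
    (∃ A : Matrix (Fin p) (Fin q) ℝ,
        (∀ i j, A i j ∈ Set.Icc (m i j) (M i j)) ∧ A.rank = r) ↔
      ((∃ A : Matrix (Fin p) (Fin q) ℝ,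
          (∀ i j, A i j ∈
            Set.Icc (m i j) (if i = i₀ ∧ j = j₀ then 0 else M i j)) ∧ A.rank = r) ∨
        (∃ A : Matrix (Fin p) (Fin q) ℝ,
          (∀ i j, A i j ∈
            Set.Icc (if i = i₀ ∧ j = j₀ then 0 else m i j) (M i j)) ∧ A.rank = r)) := by
  constructor
  · rintro ⟨A, hA, hr⟩
    rcases le_total (A i₀ j₀) 0 with h | h
    · left
      refine ⟨A, fun i j => ?_, hr⟩
      obtain ⟨h1, h2⟩ := hA i j
      refine ⟨h1, ?_⟩
      split_ifs with hij
      · obtain ⟨rfl, rfl⟩ := hij; exact h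
      · exact h2
    · right
      refine ⟨A, fun i j => ?_, hr⟩
      obtain ⟨h1, h2⟩ := hA i j
      refine ⟨?_, h2⟩
      split_ifs with hij
      · obtain ⟨rfl, rfl⟩ := hij; exact h
      · exact h1
  · rintro (⟨A, hA, hr⟩ | ⟨A, hA, hr⟩)
    · refine ⟨A, fun i j => ?_, hr⟩
      obtain ⟨h1, h2⟩ := hA i j
      refine ⟨h1, ?_⟩
      split_ifs at h2 with hij
      · obtain ⟨rfl, rfl⟩ := hij; exact h2.trans h0.2
      · exact h2
    · refine ⟨A, fun i j => ?_, hr⟩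
      obtain ⟨h1, h2⟩ := hA i j
      refine ⟨?_, h2⟩
      split_ifs at h1 with hij
      · obtain ⟨rfl, rfl⟩ := hij; exact h0.1.trans h1
      · exact h1
end

section
/- Let μ be a reduced p×q interval matrix such that m_{i,j} ≥ 0 whenever i = 1 or j = 1 (all entries of the first row and first column are intervals contained in ℝ_{≥0}). If there exists a position (i,j) with M_{i,j} < 0, then no matrix A ∈ μ has rank 1. -/
/-- All 2×2 minors of a rank-one matrix vanish. -/
lemma minor_eq_of_rank_one {m n : Type*} [Fintype m] [Fintype n] [DecidableEq n]
    (A : Matrix m n ℝ) (h : A.rank = 1) (i k : m) (j l : n) :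
    A i j * A k l = A i l * A k j := by
  rw [Matrix.rank, finrank_eq_one_iff'] at h
  obtain ⟨v, -, hv⟩ := h
  have col : ∀ j : n, ∃ c : ℝ, ∀ i, c * (v : m → ℝ) i = A i j := by
    intro j
    have hmem : (fun i => A i j) ∈ LinearMap.range A.mulVecLin := by
      refine ⟨Pi.single j 1, ?_⟩
      ext i
      simp [Matrix.mulVecLin, Matrix.mulVec, dotProduct, Pi.single_apply,
        mul_comm]
    obtain ⟨c, hc⟩ := hv ⟨_, hmem⟩
    exact ⟨c, fun i => congrFun (congrArg Subtype.val hc) i⟩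
  obtain ⟨cj, hcj⟩ := col j
  obtain ⟨cl, hcl⟩ := col l
  rw [← hcj i, ← hcl k, ← hcl i, ← hcj k]; ring

/-- Let μ be a reduced interval matrix whose first-row and first-column
entries are intervals contained in ℝ_{≥0}. If some entry interval is contained in
ℝ_{<0} (i.e. M i j < 0), then μ contains no rank-one matrix. -/
theorem no_rank_one_of_negative_entry (p q : ℕ)
    (m M : Matrix (Fin (p + 1)) (Fin (q + 1)) ℝ)
    (hle : ∀ i j, m i j ≤ M i j)
    (hredrow : ∀ i, ∃ j, ¬ (m i j ≤ 0 ∧ 0 ≤ M i j))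
    (hredcol : ∀ j, ∃ i, ¬ (m i j ≤ 0 ∧ 0 ≤ M i j))
    (hfirst : ∀ i j, i = 0 ∨ j = 0 → 0 ≤ m i j)
    (hneg : ∃ i j, M i j < 0) :
    ∀ A : Matrix (Fin (p + 1)) (Fin (q + 1)) ℝ,
      (∀ i j, A i j ∈ Set.Icc (m i j) (M i j)) → A.rank ≠ 1 := by
  intro A hA hrank
  obtain ⟨i, j, hMij⟩ := hneg
  -- first row has a strictly positive entry
  obtain ⟨j0, hj0⟩ := hredrow 0
  have hm0j0 : 0 < m 0 j0 := by
    rcases lt_or_ge 0 (m 0 j0) with h | h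
    · exact h
    · exact absurd ⟨h, le_trans (hfirst 0 j0 (Or.inl rfl)) (hle 0 j0)⟩ hj0
  -- first column has a strictly positive entry
  obtain ⟨i0, hi0⟩ := hredcol 0
  have hmi00 : 0 < m i0 0 := by
    rcases lt_or_ge 0 (m i0 0) with h | h
    · exact h
    · exact absurd ⟨h, le_trans (hfirst i0 0 (Or.inr rfl)) (hle i0 0)⟩ hi0
  have hA0j0 : 0 < A 0 j0 := lt_of_lt_of_le hm0j0 (hA 0 j0).1
  have hAi00 : 0 < A i0 0 := lt_of_lt_of_le hmi00 (hA i0 0).1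
  -- A 0 0 > 0
  have h1 : A 0 0 * A i0 j0 = A 0 j0 * A i0 0 := minor_eq_of_rank_one A hrank 0 i0 0 j0
  have hA00 : 0 < A 0 0 := by
    have hpos : 0 < A 0 0 * A i0 j0 := h1 ▸ mul_pos hA0j0 hAi00
    have h00 : 0 ≤ A 0 0 := le_trans (hfirst 0 0 (Or.inl rfl)) (hA 0 0).1
    rcases h00.lt_or_eq with h | h
    · exact h
    · exfalso; rw [← h] at hpos; simp at hpos
  -- contradiction with negative entry
  have hAij : A i j < 0 := lt_of_le_of_lt (hA i j).2 hMij
  have h2 : A 0 0 * A i j = A 0 j * A i 0 := minor_eq_of_rank_one A hrank 0 i 0 j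
  have hA0j : 0 ≤ A 0 j := le_trans (hfirst 0 j (Or.inl rfl)) (hA 0 j).1
  have hAi0 : 0 ≤ A i 0 := le_trans (hfirst i 0 (Or.inr rfl)) (hA i 0).1
  nlinarith [mul_pos hA00 (neg_pos.mpr hAij), mul_nonneg hA0j hAi0]
end

section
/- Let μ be a reduced p×q interval matrix such that m_{i,j} ≥ 0 whenever i = 1 or j = 1, and such that M_{i,j} ≥ 0 for all i,j. Let μ̄ be the interval matrix with entries μ̄_{i,j} = [max{0, m_{i,j}}, M_{i,j}]. Then μ contains a rank-one matrix if and only if μ̄ contains a rank-one matrix. -/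
/-- A rank-one matrix decomposes as an outer product. -/
lemma rank_one_decomp {n m : Type*} [Fintype n] [Fintype m] [DecidableEq m]
    (A : Matrix n m ℝ) (h : A.rank = 1) :
    ∃ (u : n → ℝ) (v : m → ℝ), ∀ i j, A i j = u i * v j := by
  rw [Matrix.rank] at h
  obtain ⟨⟨w, hw⟩, hwne, hspan⟩ := finrank_eq_one_iff'.mp h
  have key : ∀ j, ∃ c : ℝ, ∀ i, A i j = w i * c := by
    intro j
    obtain ⟨c, hc⟩ := hspan ⟨A.mulVec (Pi.single j 1),
      LinearMap.mem_range.mpr ⟨Pi.single j 1, rfl⟩⟩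
    have hc' : c • w = A.mulVec (Pi.single j 1) := congrArg Subtype.val hc
    refine ⟨c, fun i => ?_⟩
    have h2 := congrFun hc' i
    simp only [Pi.smul_apply, smul_eq_mul] at h2
    have h3 : A.mulVec (Pi.single j 1) i = A i j := by
      simp [Matrix.mulVec, dotProduct, Pi.single_apply, mul_ite]
    rw [h3] at h2
    rw [← h2]; ring
  choose v hv using key
  exact ⟨w, v, fun i j => hv j i⟩

/-- Let μ be a reduced interval matrix whose first-row and first-column
entries are intervals contained in ℝ_{≥0}, and with M i j ≥ 0 everywhere. Let μ̄ have
entries [max{0, m i j}, M i j]. Then μ contains a rank-one matrix iff μ̄ does. -/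
theorem rank_one_iff_truncated (p q : ℕ)
    (m M : Matrix (Fin (p + 1)) (Fin (q + 1)) ℝ)
    (hle : ∀ i j, m i j ≤ M i j)
    (hredrow : ∀ i, ∃ j, ¬ (m i j ≤ 0 ∧ 0 ≤ M i j))
    (hredcol : ∀ j, ∃ i, ¬ (m i j ≤ 0 ∧ 0 ≤ M i j))
    (hfirst : ∀ i j, i = 0 ∨ j = 0 → 0 ≤ m i j)
    (hMpos : ∀ i j, 0 ≤ M i j) :
    (∃ A : Matrix (Fin (p + 1)) (Fin (q + 1)) ℝ,
        (∀ i j, A i j ∈ Set.Icc (m i j) (M i j)) ∧ A.rank = 1) ↔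
      (∃ A : Matrix (Fin (p + 1)) (Fin (q + 1)) ℝ,
        (∀ i j, A i j ∈ Set.Icc (max 0 (m i j)) (M i j)) ∧ A.rank = 1) := by
  constructor
  · rintro ⟨A, hA, hrank⟩
    -- all entries of A are strictly positive
    obtain ⟨u, v, huv⟩ := rank_one_decomp A hrank
    -- each row has a strictly positive lower bound entry
    have hrow : ∀ i, ∃ j, 0 < m i j := by
      intro i
      obtain ⟨j, hj⟩ := hredrow i
      exact ⟨j, by by_contra h; exact hj ⟨le_of_not_gt h, hMpos i j⟩⟩
    have hcol : ∀ j, ∃ i, 0 < m i j := by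
      intro j
      obtain ⟨i, hi⟩ := hredcol j
      exact ⟨i, by by_contra h; exact hi ⟨le_of_not_gt h, hMpos i j⟩⟩
    have hu : ∀ i, u i ≠ 0 := by
      intro i hui
      obtain ⟨j, hj⟩ := hrow i
      have := (hA i j).1
      rw [huv i j, hui, zero_mul] at this
      linarith
    have hv : ∀ j, v j ≠ 0 := by
      intro j hvj
      obtain ⟨i, hi⟩ := hcol j
      have := (hA i j).1
      rw [huv i j, hvj, mul_zero] at this
      linarith
    have hAnz : ∀ i j, A i j ≠ 0 := fun i j h =>
      (mul_ne_zero (hu i) (hv j)) (by rw [← huv i j]; exact h)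
    have hrow0 : ∀ j, 0 < A 0 j := fun j =>
      lt_of_le_of_ne (le_trans (hfirst 0 j (Or.inl rfl)) (hA 0 j).1) (Ne.symm (hAnz 0 j))
    have hcol0 : ∀ i, 0 < A i 0 := fun i =>
      lt_of_le_of_ne (le_trans (hfirst i 0 (Or.inr rfl)) (hA i 0).1) (Ne.symm (hAnz i 0))
    have hpos : ∀ i j, 0 < A i j := by
      intro i j
      have h1 : 0 < u i * v 0 := by rw [← huv i 0]; exact hcol0 i
      have h2 : 0 < u 0 * v j := by rw [← huv 0 j]; exact hrow0 j
      have h3 : 0 < u 0 * v 0 := by rw [← huv 0 0]; exact hcol0 0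
      rw [huv i j]
      nlinarith [mul_pos h1 h2]
    exact ⟨A, fun i j => ⟨max_le (le_of_lt (hpos i j)) (hA i j).1, (hA i j).2⟩, hrank⟩
  · rintro ⟨A, hA, hrank⟩
    exact ⟨A, fun i j => ⟨le_trans (le_max_right 0 (m i j)) (hA i j).1, (hA i j).2⟩, hrank⟩
end

section
/- Let μ = ([m_{i,j}, M_{i,j}])_{i,j} be a p×q reduced interval matrix with p, q ≥ 2 and 0 ≤ m_{i,j} ≤ M_{i,j} for all i ∈ {1,…,p} and j ∈ {1,…,q}. There exists A ∈ μ with rank(A) = 1 if and only if, for every natural number h with 2 ≤ h ≤ 2^{min{p,q}−1}, for all (not necessarily distinct) indices i₁,…,i_h ∈ {1,…,p} and j₁,…,j_h ∈ {1,…,q}, and for every permutation σ of {1,…,h}, one has m_{i₁,j₁}·…·m_{i_h,j_h} ≤ M_{i₁,j_{σ(1)}}·…·M_{i_h,j_{σ(h)}}. -/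
/-!
For `A = u ⊗ w ≥ 0` the product `∏ₜ A (iₜ, jₜ)` does not change when the `jₜ` are permuted,
which gives the product inequalities. Conversely, put on the columns the weighted digraph
`colRatio m M j j' = maxᵢ m i j' / M i j`. If every closed walk has weight `≤ 1`, then `v j`,
the supremum of the weights of walks ending at `j`, is finite (a repeated vertex lets one cut
out a cycle, so walks shorter than the number of columns suffice) and satisfies
`v j * colRatio m M j j' ≤ v j'`; then `u i = maxⱼ m i j / v j` gives `m ≤ u ⊗ v ≤ M`.
A cycle of length `d` has weight `≤ 1` by the product inequality for `h = d` and `σ` a rotation,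
and after transposing we may assume `d ≤ min p q ≤ 2 ^ (min p q - 1)`.
-/

open Finset Matrix

section Walks

variable {ι : Type*} (W : ι → ι → ℝ)

def walkWeight (g : ℕ → ι) (n : ℕ) : ℝ :=
  ∏ t ∈ range n, W (g t) (g (t + 1))

variable {W}

theorem walkWeight_nonneg (hW : ∀ i j, 0 ≤ W i j) (g : ℕ → ι) (n : ℕ) :
    0 ≤ walkWeight W g n :=
  prod_nonneg fun t _ => hW (g t) (g (t + 1))

theorem walkWeight_le_pow {K : ℝ} (hW : ∀ i j, 0 ≤ W i j) (hK : ∀ i j, W i j ≤ K)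
    (g : ℕ → ι) (n : ℕ) : walkWeight W g n ≤ K ^ n := by
  calc walkWeight W g n ≤ ∏ _t ∈ range n, K :=
        prod_le_prod (fun t _ => hW _ _) fun t _ => hK (g t) (g (t + 1))
    _ = K ^ n := by rw [prod_const, card_range]

theorem walkWeight_congr {g g' : ℕ → ι} {n : ℕ} (h : ∀ t ≤ n, g t = g' t) :
    walkWeight W g n = walkWeight W g' n :=
  prod_congr rfl fun t ht => by
    rw [mem_range] at ht
    rw [h t ht.le, h (t + 1) ht]

theorem walkWeight_add (g : ℕ → ι) (a k : ℕ) :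
    walkWeight W g (a + k) = walkWeight W g a * walkWeight W (fun t => g (a + t)) k := by
  simp only [walkWeight, prod_range_add, add_assoc]

theorem walkWeight_update_succ (g : ℕ → ι) (n : ℕ) (j : ι) :
    walkWeight W (Function.update g (n + 1) j) (n + 1) = walkWeight W g n * W (g n) j := by
  rw [walkWeight, prod_range_succ, ← walkWeight, Function.update_self,
    Function.update_of_ne (by omega)]
  congr 1
  exact walkWeight_congr fun t ht => Function.update_of_ne (by omega) _ _

theorem walkWeight_le_of_closed_segment (hW : ∀ i j, 0 ≤ W i j) {g : ℕ → ι} {a d : ℕ}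
    (hclosed : g (a + d) = g a) (hcycle : walkWeight W (fun t => g (a + t)) d ≤ 1) (e : ℕ) :
    walkWeight W g (a + d + e) ≤
      walkWeight W (fun t => if t < a then g t else g (t + d)) (a + e) := by
  set g' : ℕ → ι := fun t => if t < a then g t else g (t + d)
  have hprefix : walkWeight W g' a = walkWeight W g a := walkWeight_congr fun t ht => by
    rcases ht.lt_or_eq with ht | rfl
    · simp [g', ht]
    · simp [g', hclosed]
  have hsuffix : (fun t => g' (a + t)) = fun t => g (a + d + t) := funext fun t => by
    simp only [g', if_neg (Nat.not_lt.mpr (Nat.le_add_right a t))]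
    congr 1
    omega
  rw [walkWeight_add, walkWeight_add, walkWeight_add g', hprefix, hsuffix]
  exact mul_le_mul_of_nonneg_right
    (mul_le_of_le_one_right (walkWeight_nonneg hW _ _) hcycle) (walkWeight_nonneg hW _ _)

theorem exists_lt_le_card_map_eq [Fintype ι] (g : ℕ → ι) :
    ∃ a b, a < b ∧ b ≤ Fintype.card ι ∧ g b = g a := by
  obtain ⟨x, y, hxy, hg⟩ :=
    Fintype.exists_ne_map_eq_of_card_lt (fun t : Fin (Fintype.card ι + 1) => g t) (by simp)
  rcases lt_or_gt_of_ne (Fin.val_injective.ne hxy) with h | h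
  · exact ⟨x, y, h, Nat.lt_succ_iff.mp y.isLt, hg.symm⟩
  · exact ⟨y, x, h, Nat.lt_succ_iff.mp x.isLt, hg⟩

theorem apply_finRotate_eq_apply_succ {d : ℕ} {g : ℕ → ι} (hg : g d = g 0)
    (t : Fin d) : g (finRotate d t) = g (t + 1) := by
  obtain ⟨n, rfl⟩ := Nat.exists_eq_add_one_of_ne_zero t.pos.ne'
  rw [coe_finRotate]
  split_ifs with ht
  · simp [ht, hg]
  · rfl

variable [Fintype ι]

theorem exists_short_walk_le (hW : ∀ i j, 0 ≤ W i j)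
    (hcyc : ∀ d ≤ Fintype.card ι, ∀ g : ℕ → ι, g d = g 0 → walkWeight W g d ≤ 1)
    (n : ℕ) (g : ℕ → ι) :
    ∃ k < Fintype.card ι, ∃ g' : ℕ → ι, g' k = g n ∧ walkWeight W g n ≤ walkWeight W g' k := by
  induction n using Nat.strong_induction_on generalizing g with
  | _ n ih =>
  by_cases hn : n < Fintype.card ι
  · exact ⟨n, hn, g, rfl, le_rfl⟩
  obtain ⟨a, b, hab, hb, hgab⟩ := exists_lt_le_card_map_eq g
  obtain ⟨d, rfl⟩ := Nat.exists_eq_add_of_lt hab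
  obtain ⟨e, rfl⟩ := Nat.exists_eq_add_of_le (show a + d + 1 ≤ n by omega)
  have hcycle := hcyc (d + 1) (by omega) (fun t => g (a + t)) (by simpa [add_assoc] using hgab)
  obtain ⟨k, hk, g', hend, hle⟩ := ih (a + e) (by omega) _
  refine ⟨k, hk, g', hend.trans ?_, (walkWeight_le_of_closed_segment hW ?_ hcycle e).trans hle⟩
  · simp only [Nat.not_lt.mpr (Nat.le_add_right a e), if_false]
    congr 1
    omega
  · simpa [add_assoc] using hgab

theorem exists_pos_potential (hW : ∀ i j, 0 ≤ W i j)
    (hcyc : ∀ d ≤ Fintype.card ι, ∀ g : ℕ → ι, g d = g 0 → walkWeight W g d ≤ 1) :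
    ∃ v : ι → ℝ, (∀ j, 0 < v j) ∧ ∀ j j', v j * W j j' ≤ v j' := by
  let S : ι → Set ℝ := fun j => {x | ∃ n g, g n = j ∧ walkWeight W g n = x}
  have hone : ∀ j, (1 : ℝ) ∈ S j := fun j => ⟨0, fun _ => j, rfl, prod_range_zero _⟩
  obtain ⟨K, hK⟩ := Finite.exists_le (Function.uncurry W)
  have hbdd : ∀ j, BddAbove (S j) := fun j => ⟨max K 1 ^ Fintype.card ι, by
    rintro _ ⟨n, g, -, rfl⟩
    obtain ⟨k, hk, g', -, hle⟩ := exists_short_walk_le hW hcyc n g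
    calc walkWeight W g n ≤ walkWeight W g' k := hle
      _ ≤ max K 1 ^ k :=
        walkWeight_le_pow hW (fun i j => (hK (i, j)).trans (le_max_left _ _)) g' k
      _ ≤ max K 1 ^ Fintype.card ι := pow_le_pow_right₀ (le_max_right _ _) hk.le⟩
  refine ⟨fun j => sSup (S j), fun j => one_pos.trans_le (le_csSup (hbdd j) (hone j)),
    fun j j' => ?_⟩
  rw [mul_comm, ← smul_eq_mul, ← Real.sSup_smul_of_nonneg (hW j j')]
  refine csSup_le_csSup (hbdd j') ⟨_, Set.smul_mem_smul_set (hone j)⟩ ?_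
  rintro _ ⟨_, ⟨n, g, rfl, rfl⟩, rfl⟩
  exact ⟨n + 1, Function.update g (n + 1) j', Function.update_self .., by
    rw [walkWeight_update_succ, mul_comm]; rfl⟩

end Walks

theorem exists_eq_vecMulVec_of_rank_le_one {α β K : Type*} [Fintype β] [Field K]
    {A : Matrix α β K} (hA : A.rank ≤ 1) : ∃ (u : α → K) (w : β → K), A = vecMulVec u w := by
  have : Module.Finite K (Submodule.span K (Set.range A.col)) :=
    Module.Finite.span_of_finite K (Set.finite_range _)
  rw [rank_eq_finrank_span_cols, finrank_le_one_iff] at hA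
  obtain ⟨u, hu⟩ := hA
  choose w hw using fun j => hu ⟨A.col j, Submodule.subset_span ⟨j, rfl⟩⟩
  refine ⟨u, w, ext fun i j => ?_⟩
  simpa [vecMulVec_apply, mul_comm] using (congrFun (congrArg Subtype.val (hw j)) i).symm

theorem rank_vecMulVec_eq_one {α β K : Type*} [Fintype β] [Field K] {u : α → K} {w : β → K}
    (hu : u ≠ 0) (hw : w ≠ 0) : (vecMulVec u w).rank = 1 := by
  have : Module.Finite K (Submodule.span K (Set.range (vecMulVec u w).col)) :=
    Module.Finite.span_of_finite K (Set.finite_range _)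
  refine le_antisymm (rank_vecMulVec_le u w) ?_
  obtain ⟨j, hj⟩ := Function.ne_iff.mp hw
  rw [rank_eq_finrank_span_cols, Submodule.one_le_finrank_iff, Submodule.ne_bot_iff]
  refine ⟨(vecMulVec u w).col j, Submodule.subset_span ⟨j, rfl⟩, fun h => hu ?_⟩
  funext i
  exact (mul_eq_zero.mp (congrFun h i)).resolve_right hj

section IntervalMatrix

variable {α β : Type*}

def PermProductBound (m M : Matrix α β ℝ) (h : ℕ) : Prop :=
  ∀ (iv : Fin h → α) (jv : Fin h → β) (σ : Equiv.Perm (Fin h)),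
    ∏ t, m (iv t) (jv t) ≤ ∏ t, M (iv t) (jv (σ t))

variable {m M : Matrix α β ℝ}

theorem permProductBound_of_le_one (hle : ∀ i j, m i j ≤ M i j) {h : ℕ} (hh : h ≤ 1) :
    PermProductBound m M h := by
  intro iv jv σ
  interval_cases h
  · simp
  · simpa [Subsingleton.elim (σ 0) 0] using hle (iv 0) (jv 0)

theorem PermProductBound.transpose {h : ℕ} (H : PermProductBound m M h) :
    PermProductBound mᵀ Mᵀ h := by
  intro iv jv σ
  calc ∏ t, mᵀ (iv t) (jv t) ≤ ∏ t, M (jv t) (iv (σ⁻¹ t)) := H jv iv σ⁻¹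
    _ = ∏ t, Mᵀ (iv t) (jv (σ t)) := by
      rw [← Equiv.prod_comp σ]
      simp

theorem permProductBound_of_vecMulVec_between (hm : ∀ i j, 0 ≤ m i j) {u : α → ℝ} {w : β → ℝ}
    (hmA : ∀ i j, m i j ≤ vecMulVec u w i j) (hAM : ∀ i j, vecMulVec u w i j ≤ M i j)
    (h : ℕ) : PermProductBound m M h := by
  intro iv jv σ
  calc ∏ t, m (iv t) (jv t) ≤ ∏ t, vecMulVec u w (iv t) (jv t) :=
        prod_le_prod (fun t _ => hm _ _) fun t _ => hmA _ _
    _ = ∏ t, vecMulVec u w (iv t) (jv (σ t)) := by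
        simp only [vecMulVec_apply, prod_mul_distrib, Equiv.prod_comp σ fun t => w (jv t)]
    _ ≤ ∏ t, M (iv t) (jv (σ t)) :=
        prod_le_prod (fun t _ => (hm _ _).trans (hmA _ _)) fun t _ => hAM _ _

theorem PermProductBound.pos_of_two (H : PermProductBound m M 2) (hm : ∀ i j, 0 ≤ m i j)
    (hle : ∀ i j, m i j ≤ M i j) (hrow : ∀ i, ∃ j, 0 < m i j) (hcol : ∀ j, ∃ i, 0 < m i j)
    (i : α) (j : β) : 0 < M i j := by
  obtain ⟨j', hj'⟩ := hrow i
  obtain ⟨i', hi'⟩ := hcol j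
  have h2 := H ![i, i'] ![j', j] (Equiv.swap 0 1)
  simp only [Fin.prod_univ_two, Matrix.cons_val_zero, Matrix.cons_val_one, Equiv.swap_apply_left,
    Equiv.swap_apply_right] at h2
  exact pos_of_mul_pos_left ((mul_pos hj' hi').trans_le h2) ((hm i' j').trans (hle i' j'))

theorem exists_pos_mul_between_of_potential [Fintype β] [Nonempty β] {v : β → ℝ}
    (hv : ∀ j, 0 < v j) (hpot : ∀ i j j', v j * m i j' ≤ v j' * M i j)
    (hrow : ∀ i, ∃ j, 0 < m i j) :
    ∃ u : α → ℝ, (∀ i, 0 < u i) ∧ ∀ i j, m i j ≤ u i * v j ∧ u i * v j ≤ M i j := by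
  have hle_sup : ∀ i j, m i j / v j ≤ univ.sup' univ_nonempty fun j => m i j / v j :=
    fun i j => le_sup' (fun j => m i j / v j) (mem_univ j)
  refine ⟨fun i => univ.sup' univ_nonempty fun j => m i j / v j, fun i => ?_, fun i j => ⟨?_, ?_⟩⟩
  · obtain ⟨j, hj⟩ := hrow i
    exact (div_pos hj (hv j)).trans_le (hle_sup i j)
  · rw [← div_le_iff₀ (hv j)]
    exact hle_sup i j
  · rw [← le_div_iff₀ (hv j)]
    refine sup'_le _ _ fun j' _ => ?_
    rw [div_le_div_iff₀ (hv j') (hv j)]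
    linarith [hpot i j j']

variable [Fintype α] [Nonempty α]

/-- If `m ≤ u ⊗ v ≤ M` with `u, v > 0`, then `m i j' / M i j ≤ u i v j' / (u i v j) = v j' / v j`
for every row `i`; `colRatio m M j j'` is the best of these lower bounds. -/
noncomputable def colRatio (m M : Matrix α β ℝ) (j j' : β) : ℝ :=
  univ.sup' univ_nonempty fun i => m i j' / M i j

theorem div_le_colRatio (i : α) (j j' : β) : m i j' / M i j ≤ colRatio m M j j' :=
  le_sup' (fun i => m i j' / M i j) (mem_univ i)

theorem colRatio_nonneg (hM : ∀ i j, 0 < M i j) (hcol : ∀ j, ∃ i, 0 < m i j) (j j' : β) :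
    0 ≤ colRatio m M j j' := by
  obtain ⟨i, hi⟩ := hcol j'
  exact (div_pos hi (hM i j)).le.trans (div_le_colRatio i j j')

theorem walkWeight_colRatio_le_one (hM : ∀ i j, 0 < M i j) {d : ℕ} (H : PermProductBound m M d)
    {g : ℕ → β} (hg : g d = g 0) : walkWeight (colRatio m M) g d ≤ 1 := by
  choose iv hiv using fun t : Fin d =>
    exists_mem_eq_sup' univ_nonempty fun i => m i (g (t + 1)) / M i (g t)
  have key := H iv (fun t => g (t + 1)) (finRotate d)⁻¹
  rw [walkWeight, ← Fin.prod_univ_eq_prod_range (fun t => colRatio m M (g t) (g (t + 1)))]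
  simp only [colRatio, fun t => (hiv t).2, prod_div_distrib]
  rw [div_le_one (prod_pos fun t _ => hM _ _)]
  refine key.trans_eq (prod_congr rfl fun t _ => ?_)
  rw [← apply_finRotate_eq_apply_succ hg, ← Equiv.Perm.mul_apply, mul_inv_cancel,
    Equiv.Perm.one_apply]

theorem exists_pos_mul_between [Fintype β] [Nonempty β] (hM : ∀ i j, 0 < M i j)
    (hrow : ∀ i, ∃ j, 0 < m i j) (hcol : ∀ j, ∃ i, 0 < m i j)
    (H : ∀ h ≤ Fintype.card β, PermProductBound m M h) :
    ∃ (u : α → ℝ) (v : β → ℝ), (∀ i, 0 < u i) ∧ (∀ j, 0 < v j) ∧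
      ∀ i j, m i j ≤ u i * v j ∧ u i * v j ≤ M i j := by
  obtain ⟨v, hv, hvW⟩ := exists_pos_potential (colRatio_nonneg hM hcol)
    fun d hd _ hg => walkWeight_colRatio_le_one hM (H d hd) hg
  have hpot : ∀ i j j', v j * m i j' ≤ v j' * M i j := fun i j j' => by
    have := (mul_le_mul_of_nonneg_left (div_le_colRatio i j j') (hv j).le).trans (hvW j j')
    rwa [mul_div_assoc', div_le_iff₀ (hM i j)] at this
  obtain ⟨u, hu, huv⟩ := exists_pos_mul_between_of_potential hv hpot hrow
  exact ⟨u, v, hu, hv, huv⟩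

theorem exists_pos_mul_between_of_le_min [Fintype β] [Nonempty β]
    (hM : ∀ i j, 0 < M i j) (hrow : ∀ i, ∃ j, 0 < m i j) (hcol : ∀ j, ∃ i, 0 < m i j)
    (H : ∀ h ≤ min (Fintype.card α) (Fintype.card β), PermProductBound m M h) :
    ∃ (u : α → ℝ) (v : β → ℝ), (∀ i, 0 < u i) ∧ (∀ j, 0 < v j) ∧
      ∀ i j, m i j ≤ u i * v j ∧ u i * v j ≤ M i j := by
  rcases le_total (Fintype.card β) (Fintype.card α) with hβα | hαβ
  · exact exists_pos_mul_between hM hrow hcol fun h hh => H h (le_min (hh.trans hβα) hh)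
  · obtain ⟨v, u, hv, hu, hvu⟩ := exists_pos_mul_between (m := mᵀ) (M := Mᵀ)
      (fun j i => hM i j) hcol hrow fun h hh => (H h (le_min hh (hh.trans hαβ))).transpose
    exact ⟨u, v, hu, hv, fun i j => by simpa only [transpose_apply, mul_comm] using hvu j i⟩

end IntervalMatrix

/-- For a reduced p×q interval matrix (p, q ≥ 2) with nonnegative lower
bounds, μ contains a rank-one matrix iff, for every 2 ≤ h ≤ 2^(min p q - 1), all index
tuples i₁,…,i_h, j₁,…,j_h and every permutation σ of {1,…,h}, the product of the
corresponding minima is at most the product of the σ-permuted maxima. -/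
theorem rank_one_iff_products (p q : ℕ) (hp : 2 ≤ p) (hq : 2 ≤ q)
    (m M : Matrix (Fin p) (Fin q) ℝ)
    (hm : ∀ i j, 0 ≤ m i j)
    (hle : ∀ i j, m i j ≤ M i j)
    (hredrow : ∀ i, ∃ j, ¬ (m i j ≤ 0 ∧ 0 ≤ M i j))
    (hredcol : ∀ j, ∃ i, ¬ (m i j ≤ 0 ∧ 0 ≤ M i j)) :
    (∃ A : Matrix (Fin p) (Fin q) ℝ,
        (∀ i j, A i j ∈ Set.Icc (m i j) (M i j)) ∧ A.rank = 1) ↔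
      ∀ h : ℕ, 2 ≤ h → h ≤ 2 ^ (min p q - 1) →
        ∀ (iv : Fin h → Fin p) (jv : Fin h → Fin q) (σ : Equiv.Perm (Fin h)),
          ∏ t, m (iv t) (jv t) ≤ ∏ t, M (iv t) (jv (σ t)) := by
  have hpos : ∀ i j, ¬ (m i j ≤ 0 ∧ 0 ≤ M i j) → 0 < m i j :=
    fun i j h => lt_of_not_ge fun h0 => h ⟨h0, (hm i j).trans (hle i j)⟩
  have hrow : ∀ i, ∃ j, 0 < m i j := fun i => (hredrow i).imp (hpos i)
  have hcol : ∀ j, ∃ i, 0 < m i j := fun j => (hredcol j).imp fun i => hpos i j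
  constructor
  · rintro ⟨A, hA, hrank⟩ h - -
    obtain ⟨u, w, rfl⟩ := exists_eq_vecMulVec_of_rank_le_one hrank.le
    exact permProductBound_of_vecMulVec_between hm (fun i j => (hA i j).1)
      (fun i j => (hA i j).2) h
  · intro H
    have hmin : min p q ≤ 2 ^ (min p q - 1) := by
      have := @Nat.lt_two_pow_self (min p q - 1)
      omega
    have hprod : ∀ h ≤ min p q, PermProductBound m M h := fun h hh =>
      if h1 : h ≤ 1 then permProductBound_of_le_one hle h1 else H h (by omega) (hh.trans hmin)
    have : NeZero p := ⟨by omega⟩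
    have : NeZero q := ⟨by omega⟩
    obtain ⟨u, v, hu, hv, huv⟩ := exists_pos_mul_between_of_le_min
      ((hprod 2 (by omega)).pos_of_two hm hle hrow hcol) hrow hcol (by simpa using hprod)
    exact ⟨vecMulVec u v, huv, rank_vecMulVec_eq_one
      (Function.ne_iff.mpr ⟨0, (hu 0).ne'⟩) (Function.ne_iff.mpr ⟨0, (hv 0).ne'⟩)⟩
end

section
/- The 2×3 interval matrix μ with first row ([−3, 1/3], [2, 4], [0, 1]) and second row ([1, 1], [−1, 3], [1, 1]) contains no matrix of rank 1, although for every h with 2 ≤ h ≤ 2^{min{2,3}−1}, all indices i₁,…,i_h ∈ {1,2}, j₁,…,j_h ∈ {1,2,3}, and every permutation σ of {1,…,h}, the interval product μ_{i₁,j₁}·…·μ_{i_h,j_h} has nonempty intersection with the interval product μ_{i₁,j_{σ(1)}}·…·μ_{i_h,j_{σ(h)}}. -/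
/-!
A matrix of rank one in `μ` would have its first row proportional to the second row `(1, b, 1)`,
so its entries `a₁₁` and `a₁₃` would agree; they then lie in `[0, 1/3]`, which forces
`a₁₂ = a₁₁ b ≤ 1 < 2`. On the other hand only `h = 2` is allowed, and for two factors the
interval products meet as soon as, for the columns `j₁, j₂` involved, some matrix of `μ` has
those two columns proportional: the two products are then equal products of its entries.
Each pair of columns of `μ` admits such a matrix.
-/

/-- The lower-bound matrix of the counterexample. -/
noncomputable def mEx : Matrix (Fin 2) (Fin 3) ℝ := !![-3, 2, 0; 1, -1, 1]

/-- The upper-bound matrix of the counterexample. -/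
noncomputable def MEx : Matrix (Fin 2) (Fin 3) ℝ := !![1/3, 4, 1; 1, 3, 1]

open Matrix

theorem Matrix.two_le_rank_of_mul_sub_mul_ne_zero {m n K : Type*} [Fintype n] [Field K]
    (A : Matrix m n K) (i₀ i₁ : m) (j₀ j₁ : n)
    (h : A i₀ j₀ * A i₁ j₁ - A i₀ j₁ * A i₁ j₀ ≠ 0) : 2 ≤ A.rank := by
  have hdet : (A.submatrix ![i₀, i₁] ![j₀, j₁]).det ≠ 0 := by
    rw [det_fin_two]
    simpa using h
  calc 2 = (A.submatrix ![i₀, i₁] ![j₀, j₁]).rank := by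
        rw [rank_of_isUnit _ ((isUnit_iff_isUnit_det _).2 hdet.isUnit), Fintype.card_fin]
    _ ≤ A.rank := rank_submatrix_le A _ _

theorem Matrix.prod_apply_eq_prod_apply_perm {m n R : Type*} [CommMonoid R] (B : Matrix m n R)
    (i : Fin 2 → m) (j : Fin 2 → n) (σ : Equiv.Perm (Fin 2))
    (hB : ∀ i₀ i₁, B i₀ (j 0) * B i₁ (j 1) = B i₀ (j 1) * B i₁ (j 0)) :
    ∏ t, B (i t) (j t) = ∏ t, B (i t) (j (σ t)) := by
  obtain rfl | rfl : σ = 1 ∨ σ = Equiv.swap 0 1 := by revert σ; decide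
  · rfl
  · simpa [Fin.prod_univ_two] using hB (i 0) (i 1)

theorem two_le_rank_of_mem_Ex (A : Matrix (Fin 2) (Fin 3) ℝ)
    (hA : ∀ i j, A i j ∈ Set.Icc (mEx i j) (MEx i j)) : 2 ≤ A.rank := by
  have h00 := hA 0 0; have h01 := hA 0 1; have h02 := hA 0 2; have h11 := hA 1 1
  have h10 : A 1 0 = 1 := le_antisymm (hA 1 0).2 (hA 1 0).1
  have h12 : A 1 2 = 1 := le_antisymm (hA 1 2).2 (hA 1 2).1
  simp only [mEx, Fin.isValue, of_apply, cons_val', cons_val_zero, cons_val_fin_one, MEx, one_div,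
    Set.mem_Icc, cons_val_one, cons_val] at h00 h01 h02 h11
  by_cases hc : A 0 0 = A 0 2
  · -- then `A 0 0 = A 0 2 ∈ [0, 1/3]`, so `A 0 0 * A 1 1 ≤ 1 < 2 ≤ A 0 1`
    refine A.two_le_rank_of_mul_sub_mul_ne_zero 0 1 0 1 ?_
    nlinarith
  · refine A.two_le_rank_of_mul_sub_mul_ne_zero 0 1 0 2 ?_
    rwa [h10, h12, mul_one, mul_one, sub_ne_zero]

theorem exists_mem_Ex_mul_eq_mul (j₀ j₁ : Fin 3) :
    ∃ B : Matrix (Fin 2) (Fin 3) ℝ, (∀ i j, B i j ∈ Set.Icc (mEx i j) (MEx i j)) ∧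
      ∀ i₀ i₁, B i₀ j₀ * B i₁ j₁ = B i₀ j₁ * B i₁ j₀ := by
  wlog hlt : j₀ < j₁ generalizing j₀ j₁
  · rcases (not_lt.1 hlt).lt_or_eq with hgt | rfl
    · obtain ⟨B, hB, hminor⟩ := this j₁ j₀ hgt
      exact ⟨B, hB, fun i₀ i₁ => by rw [mul_comm, hminor i₁ i₀, mul_comm]⟩
    · obtain ⟨B, hB, -⟩ := this 0 1 (by decide)
      exact ⟨B, hB, fun _ _ => rfl⟩
  fin_cases j₀ <;> fin_cases j₁ <;> try exact absurd hlt (by decide)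
  · refine ⟨!![-3, 3, 0; 1, -1, 1], ?_, ?_⟩ <;> intro a b <;> fin_cases a <;> fin_cases b <;>
      norm_num [mEx, MEx]
  · refine ⟨!![0, 2, 0; 1, -1, 1], ?_, ?_⟩ <;> intro a b <;> fin_cases a <;> fin_cases b <;>
      norm_num [mEx, MEx]
  · refine ⟨!![0, 3, 1; 1, 3, 1], ?_, ?_⟩ <;> intro a b <;> fin_cases a <;> fin_cases b <;>
      norm_num [mEx, MEx]

/-- The 2×3 interval matrix with rows ([−3,1/3],[2,4],[0,1]) and
([1,1],[−1,3],[1,1]) contains no rank-one matrix, although all the interval products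
μ_{i₁,j₁}·…·μ_{i_h,j_h} and μ_{i₁,j_{σ(1)}}·…·μ_{i_h,j_{σ(h)}} (for 2 ≤ h ≤ 2^{min{2,3}-1})
have nonempty intersection; since the interval product is exactly the set of products,
nonempty intersection is expressed by the existence of pointwise choices with equal
products. -/
theorem counterexample_products_not_sufficient :
    (∀ A : Matrix (Fin 2) (Fin 3) ℝ,
        (∀ i j, A i j ∈ Set.Icc (mEx i j) (MEx i j)) → A.rank ≠ 1) ∧
      (∀ h : ℕ, 2 ≤ h → h ≤ 2 ^ (min 2 3 - 1) →
        ∀ (iv : Fin h → Fin 2) (jv : Fin h → Fin 3) (σ : Equiv.Perm (Fin h)),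
          ∃ x y : Fin h → ℝ,
            (∀ t, x t ∈ Set.Icc (mEx (iv t) (jv t)) (MEx (iv t) (jv t))) ∧
            (∀ t, y t ∈ Set.Icc (mEx (iv t) (jv (σ t))) (MEx (iv t) (jv (σ t)))) ∧
            ∏ t, x t = ∏ t, y t) := by
  refine ⟨fun A hA hrank => by simpa [hrank] using two_le_rank_of_mem_Ex A hA, ?_⟩
  intro h h2 hle iv jv σ
  obtain rfl : h = 2 := by norm_num at hle; omega
  obtain ⟨B, hB, hminor⟩ := exists_mem_Ex_mul_eq_mul (jv 0) (jv 1)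
  exact ⟨_, _, fun t => hB _ _, fun t => hB _ _, B.prod_apply_eq_prod_apply_perm iv jv σ hminor⟩
end

section
/- Let μ be a p×p interval matrix. Then Mrk(μ) < p if and only if the following two conditions hold: (1) there is no permutation σ of {1,…,p} such that all the entries μ_{1,σ(1)},…,μ_{p,σ(p)} are nonconstant; (2) for every totally nonconstant pg-diagonal of μ of length k with 0 ≤ k ≤ p−1, the complementary matrix of that pg-diagonal has det^c equal to 0. -/
open scoped Classical in
/-- `detc a b` : for the square interval matrix with lower bounds `a` and upper bounds `b`,
the sum over all permutations σ whose generalized diagonal consists only of constant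
entries of sign(σ) times the product of the (constant) values; the empty sum is 0. -/
noncomputable def detc {s : ℕ} (a b : Matrix (Fin s) (Fin s) ℝ) : ℝ :=
  ∑ σ : Equiv.Perm (Fin s),
    if ∀ i, a i (σ i) = b i (σ i) then
      ((Equiv.Perm.sign σ : ℤ) : ℝ) * ∏ i, a i (σ i)
    else 0

/-- The complementary matrix of the pg-diagonal given by the injections `I` (rows) and
`J` (columns): the submatrix on the complementary rows and columns, taken in
increasing order. -/
noncomputable def complMatrix {p k : ℕ} (a : Matrix (Fin p) (Fin p) ℝ)
    (I J : Fin k → Fin p) (hI : Function.Injective I) (hJ : Function.Injective J) :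
    Matrix (Fin (p - k)) (Fin (p - k)) ℝ := fun x y =>
  a (((Finset.univ.image I)ᶜ.orderIsoOfFin
        (by simp [Finset.card_compl, Finset.card_image_of_injective _ hI]) x : Fin p))
    (((Finset.univ.image J)ᶜ.orderIsoOfFin
        (by simp [Finset.card_compl, Finset.card_image_of_injective _ hJ]) y : Fin p))


open Finset

namespace IntervalRank

open scoped Classical

variable {p : ℕ}

noncomputable def sgn {n : ℕ} (σ : Equiv.Perm (Fin n)) : ℝ := ((Equiv.Perm.sign σ : ℤ) : ℝ)

lemma sgn_ne_zero {n : ℕ} (σ : Equiv.Perm (Fin n)) : sgn σ ≠ 0 := by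
  rcases Int.units_eq_one_or (Equiv.Perm.sign σ) with h | h <;> simp [sgn, h]

lemma sgn_eq_or {n : ℕ} (σ : Equiv.Perm (Fin n)) : sgn σ = 1 ∨ sgn σ = -1 := by
  rcases Int.units_eq_one_or (Equiv.Perm.sign σ) with h | h <;> simp [sgn, h]

lemma sgn_mul {n : ℕ} (σ τ : Equiv.Perm (Fin n)) : sgn (σ * τ) = sgn σ * sgn τ := by
  simp [sgn, map_mul]

def rws (P : Finset (Fin p × Fin p)) : Finset (Fin p) := P.image Prod.fst
def cls (P : Finset (Fin p × Fin p)) : Finset (Fin p) := P.image Prod.snd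

def Ext (P : Finset (Fin p × Fin p)) (σ : Equiv.Perm (Fin p)) : Prop := ∀ q ∈ P, σ q.1 = q.2

def IsPM (P : Finset (Fin p × Fin p)) : Prop :=
  (∀ a ∈ P, ∀ b ∈ P, a.1 = b.1 → a = b) ∧ (∀ a ∈ P, ∀ b ∈ P, a.2 = b.2 → a = b)

variable (m M : Matrix (Fin p) (Fin p) ℝ)

def TN (P : Finset (Fin p × Fin p)) : Prop := ∀ q ∈ P, m q.1 q.2 ≠ M q.1 q.2

noncomputable def Dfree (P : Finset (Fin p × Fin p)) : ℝ :=
  ∑ σ : Equiv.Perm (Fin p), if Ext P σ then sgn σ * ∏ i ∈ (rws P)ᶜ, m i (σ i) else 0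

noncomputable def DD (P : Finset (Fin p × Fin p)) : ℝ :=
  ∑ σ : Equiv.Perm (Fin p),
    if Ext P σ ∧ ∀ i ∈ (rws P)ᶜ, m i (σ i) = M i (σ i) then
      sgn σ * ∏ i ∈ (rws P)ᶜ, m i (σ i) else 0

noncomputable def key (P : Finset (Fin p × Fin p)) (σ : Equiv.Perm (Fin p)) :
    Finset (Fin p × Fin p) :=
  ((rws P)ᶜ.filter fun i => m i (σ i) ≠ M i (σ i)).image fun i => (i, σ i)

def Compat (P Q : Finset (Fin p × Fin p)) : Prop :=
  (∀ q ∈ Q, q.1 ∉ rws P ∧ q.2 ∉ cls P ∧ m q.1 q.2 ≠ M q.1 q.2) ∧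
  (∀ a ∈ Q, ∀ b ∈ Q, a.1 = b.1 → a = b) ∧ (∀ a ∈ Q, ∀ b ∈ Q, a.2 = b.2 → a = b)


lemma key_compat {P : Finset (Fin p × Fin p)} {σ : Equiv.Perm (Fin p)}
    (hP : IsPM P) (hσ : Ext P σ) : Compat m M P (key m M P σ) := by
  refine ⟨?_, ?_, ?_⟩
  · rintro q hq
    simp only [key, mem_image, mem_filter, mem_compl] at hq
    obtain ⟨i, ⟨hi, hnc⟩, rfl⟩ := hq
    refine ⟨hi, ?_, hnc⟩
    intro hc
    simp only [cls, mem_image] at hc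
    obtain ⟨q', hq', hq2⟩ := hc
    have : σ q'.1 = q'.2 := hσ q' hq'
    have : σ q'.1 = σ i := by rw [this]; exact hq2.symm ▸ rfl
    have hiq : q'.1 = i := σ.injective this
    exact hi (Finset.mem_image.mpr ⟨q', hq', hiq⟩)
  · rintro a ha b hb hab
    simp only [key, mem_image, mem_filter, mem_compl] at ha hb
    obtain ⟨i, _, rfl⟩ := ha
    obtain ⟨i', _, rfl⟩ := hb
    simp only at hab
    subst hab; rfl
  · rintro a ha b hb hab
    simp only [key, mem_image, mem_filter, mem_compl] at ha hb
    obtain ⟨i, _, rfl⟩ := ha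
    obtain ⟨i', _, rfl⟩ := hb
    simp only at hab
    have := σ.injective hab
    subst this; rfl

lemma rws_union (P Q : Finset (Fin p × Fin p)) : rws (P ∪ Q) = rws P ∪ rws Q :=
  Finset.image_union _ _

lemma cond_iff {P Q : Finset (Fin p × Fin p)} (hP : IsPM P) (hQ : Compat m M P Q)
    (σ : Equiv.Perm (Fin p)) :
    (Ext P σ ∧ key m M P σ = Q) ↔
      (Ext (P ∪ Q) σ ∧ ∀ i ∈ (rws (P ∪ Q))ᶜ, m i (σ i) = M i (σ i)) := by
  constructor
  · rintro ⟨hext, rfl⟩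
    constructor
    · intro q hq
      rcases Finset.mem_union.mp hq with h | h
      · exact hext q h
      · simp only [key, mem_image, mem_filter, mem_compl] at h
        obtain ⟨i, _, rfl⟩ := h; rfl
    · intro i hi
      rw [rws_union, compl_union, Finset.mem_inter] at hi
      by_contra hnc
      have : (i, σ i) ∈ key m M P σ := by
        simp only [key, mem_image, mem_filter, mem_compl]
        exact ⟨i, ⟨(Finset.mem_compl.mp hi.1), hnc⟩, rfl⟩
      have : i ∈ rws (key m M P σ) := by
        simp only [rws, mem_image]; exact ⟨_, this, rfl⟩
      exact (Finset.mem_compl.mp hi.2) this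
  · rintro ⟨hext, hcst⟩
    have hextP : Ext P σ := fun q hq => hext q (Finset.mem_union_left _ hq)
    refine ⟨hextP, ?_⟩
    ext q
    simp only [key, mem_image, mem_filter, mem_compl]
    constructor
    · rintro ⟨i, ⟨hi, hnc⟩, rfl⟩
      by_cases hiQ : i ∈ rws Q
      · simp only [rws, mem_image] at hiQ
        obtain ⟨q', hq', rfl⟩ := hiQ
        have : σ q'.1 = q'.2 := hext q' (Finset.mem_union_right _ hq')
        rw [this]
        simpa using hq'
      · exfalso
        apply hnc
        apply hcst
        rw [rws_union, compl_union, Finset.mem_inter]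
        exact ⟨Finset.mem_compl.mpr hi, Finset.mem_compl.mpr hiQ⟩
    · intro hq
      obtain ⟨h1, _, h3⟩ := hQ.1 q hq
      have hs : σ q.1 = q.2 := hext q (Finset.mem_union_right _ hq)
      exact ⟨q.1, ⟨h1, by rw [hs]; exact h3⟩, by rw [hs]⟩


lemma compl_split {A X : Finset (Fin p)} (h : X ⊆ Aᶜ) : Aᶜ = X ∪ (A ∪ X)ᶜ := by
  ext i
  simp only [Finset.mem_compl, Finset.mem_union]
  constructor
  · intro hi
    by_cases hx : i ∈ X
    · exact Or.inl hx
    · exact Or.inr (by push_neg; exact ⟨hi, hx⟩)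
  · rintro (hx | hx)
    · exact Finset.mem_compl.mp (h hx)
    · push_neg at hx; exact hx.1

lemma prod_split {B : Matrix (Fin p) (Fin p) ℝ} {P Q : Finset (Fin p × Fin p)}
    (hQ : Compat m M P Q) (σ : Equiv.Perm (Fin p)) (hext : Ext (P ∪ Q) σ)
    (hB : ∀ i j, m i j = M i j → B i j = m i j)
    (hcst : ∀ i ∈ (rws (P ∪ Q))ᶜ, m i (σ i) = M i (σ i)) :
    ∏ i ∈ (rws P)ᶜ, B i (σ i)
      = (∏ q ∈ Q, B q.1 q.2) * ∏ i ∈ (rws (P ∪ Q))ᶜ, m i (σ i) := by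
  have hsub : rws Q ⊆ (rws P)ᶜ := by
    intro i hi
    simp only [rws, mem_image] at hi
    obtain ⟨q, hq, rfl⟩ := hi
    exact Finset.mem_compl.mpr (hQ.1 q hq).1
  have hdisj : Disjoint (rws Q) ((rws P ∪ rws Q)ᶜ) := by
    rw [Finset.disjoint_right]
    intro i hi
    simp only [Finset.mem_compl, Finset.mem_union] at hi
    push_neg at hi
    exact hi.2
  rw [show (rws P)ᶜ = rws Q ∪ (rws (P ∪ Q))ᶜ from by rw [rws_union]; exact compl_split hsub,
    Finset.prod_union (by rw [rws_union]; exact hdisj)]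
  congr 1
  · rw [rws, Finset.prod_image (fun a ha b hb hab => hQ.2.1 a ha b hb hab)]
    apply Finset.prod_congr rfl
    intro q hq
    rw [hext q (Finset.mem_union_right _ hq)]
  · apply Finset.prod_congr rfl
    intro i hi
    exact hB _ _ (hcst i hi)

lemma grouping (B : Matrix (Fin p) (Fin p) ℝ) (hB : ∀ i j, m i j = M i j → B i j = m i j)
    (P : Finset (Fin p × Fin p)) (hP : IsPM P) :
    (∑ σ : Equiv.Perm (Fin p), if Ext P σ then sgn σ * ∏ i ∈ (rws P)ᶜ, B i (σ i) else 0)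
      = ∑ Q : Finset (Fin p × Fin p),
          if Compat m M P Q then (∏ q ∈ Q, B q.1 q.2) * DD m M (P ∪ Q) else 0 := by
  rw [← Finset.sum_fiberwise (Finset.univ : Finset (Equiv.Perm (Fin p)))
      (fun σ => if Ext P σ then key m M P σ else ∅)
      (fun σ => if Ext P σ then sgn σ * ∏ i ∈ (rws P)ᶜ, B i (σ i) else 0)]
  apply Finset.sum_congr rfl
  intro Q _
  by_cases hQ : Compat m M P Q
  · rw [if_pos hQ, Finset.sum_filter, DD, Finset.mul_sum]
    apply Finset.sum_congr rfl
    intro σ _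
    by_cases hc : Ext (P ∪ Q) σ ∧ ∀ i ∈ (rws (P ∪ Q))ᶜ, m i (σ i) = M i (σ i)
    · have hc' := (cond_iff m M hP hQ σ).mpr hc
      have hkey : (if Ext P σ then key m M P σ else ∅) = Q := by
        rw [if_pos hc'.1]; exact hc'.2
      rw [if_pos hkey, if_pos hc'.1, if_pos hc, prod_split m M hQ σ hc.1 hB hc.2]
      ring
    · rw [if_neg hc, mul_zero]
      have hc' : ¬(Ext P σ ∧ key m M P σ = Q) := fun h => hc ((cond_iff m M hP hQ σ).mp h)
      by_cases he : Ext P σ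
      · have hkey : (if Ext P σ then key m M P σ else ∅) ≠ Q := by
          rw [if_pos he]; exact fun h => hc' ⟨he, h⟩
        rw [if_neg hkey]
      · by_cases hkq : (if Ext P σ then key m M P σ else ∅) = Q
        · rw [if_pos hkq, if_neg he]
        · rw [if_neg hkq]
  · rw [if_neg hQ]
    apply Finset.sum_eq_zero
    intro σ hσ
    simp only [Finset.mem_filter] at hσ
    by_cases he : Ext P σ
    · exfalso
      apply hQ
      rw [if_pos he] at hσ
      rw [← hσ.2]
      exact key_compat m M hP he
    · rw [if_neg he]


lemma isPM_union {P Q : Finset (Fin p × Fin p)} (hP : IsPM P) (hQ : Compat m M P Q) :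
    IsPM (P ∪ Q) := by
  constructor
  · intro a ha b hb hab
    rcases Finset.mem_union.mp ha with ha' | ha' <;> rcases Finset.mem_union.mp hb with hb' | hb'
    · exact hP.1 a ha' b hb' hab
    · exact absurd (show b.1 ∈ rws P from Finset.mem_image.mpr ⟨a, ha', hab⟩) (hQ.1 b hb').1
    · exact absurd (show a.1 ∈ rws P from Finset.mem_image.mpr ⟨b, hb', hab.symm⟩) (hQ.1 a ha').1
    · exact hQ.2.1 a ha' b hb' hab
  · intro a ha b hb hab
    rcases Finset.mem_union.mp ha with ha' | ha' <;> rcases Finset.mem_union.mp hb with hb' | hb'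
    · exact hP.2 a ha' b hb' hab
    · exact absurd (show b.2 ∈ cls P from Finset.mem_image.mpr ⟨a, ha', hab⟩) (hQ.1 b hb').2.1
    · exact absurd (show a.2 ∈ cls P from Finset.mem_image.mpr ⟨b, hb', hab.symm⟩) (hQ.1 a ha').2.1
    · exact hQ.2.2 a ha' b hb' hab

lemma tn_union {P Q : Finset (Fin p × Fin p)} (hP : TN m M P) (hQ : Compat m M P Q) :
    TN m M (P ∪ Q) := by
  intro q hq
  rcases Finset.mem_union.mp hq with h | h
  · exact hP q h
  · exact (hQ.1 q h).2.2

lemma card_lt {P Q : Finset (Fin p × Fin p)} (hQ : Compat m M P Q) (hne : Q.Nonempty) :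
    ((rws (P ∪ Q))ᶜ : Finset (Fin p)).card < ((rws P)ᶜ : Finset (Fin p)).card := by
  apply Finset.card_lt_card
  rw [rws_union]
  constructor
  · intro i hi
    simp only [Finset.mem_compl, Finset.mem_union] at hi ⊢
    exact fun h => hi (Or.inl h)
  · intro hsub
    obtain ⟨q, hq⟩ := hne
    have h1 : q.1 ∉ rws P := (hQ.1 q hq).1
    have h2 : q.1 ∈ rws Q := Finset.mem_image.mpr ⟨q, hq, rfl⟩
    have := hsub (Finset.mem_compl.mpr h1)
    simp only [Finset.mem_compl, Finset.mem_union] at this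
    exact this (Or.inr h2)

lemma DD_eq_zero (H : ∀ P, IsPM P → TN m M P → Dfree m P = 0) :
    ∀ P, IsPM P → TN m M P → DD m M P = 0 := by
  suffices h : ∀ n, ∀ P : Finset (Fin p × Fin p),
      ((rws P)ᶜ : Finset (Fin p)).card < n → IsPM P → TN m M P → DD m M P = 0 by
    intro P hP hT
    exact h (((rws P)ᶜ : Finset (Fin p)).card + 1) P (Nat.lt_succ_self _) hP hT
  intro n
  induction n with
  | zero => intro P hlt; exact absurd hlt (Nat.not_lt_zero _)
  | succ n ih =>
    intro P hlt hP hT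
    have hgr := grouping m M m (fun _ _ _ => rfl) P hP
    have hDf : Dfree m P = 0 := H P hP hT
    rw [Dfree] at hDf
    rw [hDf] at hgr
    have hsplit := Finset.add_sum_erase (Finset.univ : Finset (Finset (Fin p × Fin p)))
        (fun Q => if Compat m M P Q then (∏ q ∈ Q, m q.1 q.2) * DD m M (P ∪ Q) else 0)
        (Finset.mem_univ ∅)
    have hzero : ∑ Q ∈ (Finset.univ : Finset (Finset (Fin p × Fin p))).erase ∅,
        (if Compat m M P Q then (∏ q ∈ Q, m q.1 q.2) * DD m M (P ∪ Q) else 0) = 0 := by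
      apply Finset.sum_eq_zero
      intro Q hQ'
      have hne : Q ≠ ∅ := (Finset.mem_erase.mp hQ').1
      by_cases hQ : Compat m M P Q
      · rw [if_pos hQ]
        have : DD m M (P ∪ Q) = 0 := by
          apply ih
          · exact lt_of_lt_of_le (card_lt m M hQ (Finset.nonempty_of_ne_empty hne))
              (Nat.lt_succ_iff.mp hlt)
          · exact isPM_union m M hP hQ
          · exact tn_union m M hT hQ
        rw [this, mul_zero]
      · rw [if_neg hQ]
    have hcompatE : Compat m M P ∅ := ⟨fun q hq => absurd hq (Finset.notMem_empty q),
      fun a ha => absurd ha (Finset.notMem_empty a),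
      fun a ha => absurd ha (Finset.notMem_empty a)⟩
    rw [← hsplit, hzero, add_zero] at hgr
    simp only [if_pos hcompatE, Finset.prod_empty, one_mul, Finset.union_empty] at hgr
    exact hgr.symm


lemma det_expand (A : Matrix (Fin p) (Fin p) ℝ) :
    A.det = ∑ σ : Equiv.Perm (Fin p), sgn σ * ∏ i, A i (σ i) := by
  rw [← Matrix.det_transpose, Matrix.det_apply']
  apply Finset.sum_congr rfl
  intro σ _
  simp [Units.smul_def, zsmul_eq_mul, sgn, Matrix.transpose_apply]

lemma det_eq_zero_of_DD (H : ∀ P, IsPM P → TN m M P → DD m M P = 0)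
    (A : Matrix (Fin p) (Fin p) ℝ) (hA : ∀ i j, A i j ∈ Set.Icc (m i j) (M i j)) :
    A.det = 0 := by
  have hB : ∀ i j, m i j = M i j → A i j = m i j := by
    intro i j h
    have := hA i j
    rw [Set.mem_Icc] at this
    exact le_antisymm (h ▸ this.2) this.1
  have hPM : IsPM (∅ : Finset (Fin p × Fin p)) :=
    ⟨fun a ha => absurd ha (Finset.notMem_empty a), fun a ha => absurd ha (Finset.notMem_empty a)⟩
  have hdet : A.det = ∑ σ : Equiv.Perm (Fin p),
      if Ext (∅ : Finset (Fin p × Fin p)) σ then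
        sgn σ * ∏ i ∈ (rws (∅ : Finset (Fin p × Fin p)))ᶜ, A i (σ i) else 0 := by
    rw [det_expand]
    apply Finset.sum_congr rfl
    intro σ _
    have hext : Ext (∅ : Finset (Fin p × Fin p)) σ := fun q hq => absurd hq (Finset.notMem_empty q)
    rw [if_pos hext]
    congr 1
  rw [hdet, grouping m M A hB ∅ hPM]
  apply Finset.sum_eq_zero
  intro Q _
  by_cases hQ : Compat m M (∅ : Finset (Fin p × Fin p)) Q
  · rw [if_pos hQ]
    have hQPM : IsPM Q := ⟨hQ.2.1, hQ.2.2⟩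
    have hQTN : TN m M Q := fun q hq => (hQ.1 q hq).2.2
    rw [show (∅ : Finset (Fin p × Fin p)) ∪ Q = Q from Finset.empty_union Q,
      H Q hQPM hQTN, mul_zero]
  · rw [if_neg hQ]

lemma rank_lt_iff_det (A : Matrix (Fin p) (Fin p) ℝ) : A.rank < p ↔ A.det = 0 := by
  rw [← Matrix.exists_mulVec_eq_zero_iff]
  have hr : A.rank + Module.finrank ℝ (LinearMap.ker A.mulVecLin) = p := by
    simpa [Matrix.rank] using LinearMap.finrank_range_add_finrank_ker A.mulVecLin
  have hk : (∃ v, v ≠ 0 ∧ A.mulVec v = 0) ↔ LinearMap.ker A.mulVecLin ≠ ⊥ := by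
    rw [Submodule.ne_bot_iff]
    constructor
    · rintro ⟨v, hv, h0⟩; exact ⟨v, by simpa using h0, hv⟩
    · rintro ⟨v, hv, h0⟩; exact ⟨v, h0, by simpa using hv⟩
  rw [hk, Ne, ← Submodule.finrank_eq_zero (R := ℝ)]
  omega

lemma Dfree_eq_zero (hle : ∀ i j, m i j ≤ M i j)
    (hdet : ∀ A : Matrix (Fin p) (Fin p) ℝ,
      (∀ i j, A i j ∈ Set.Icc (m i j) (M i j)) → A.det = 0)
    (P : Finset (Fin p × Fin p)) (hP : IsPM P) (hT : TN m M P) : Dfree m P = 0 := by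
  set AT : Finset (Fin p × Fin p) → Matrix (Fin p) (Fin p) ℝ :=
    fun T i j => if (i, j) ∈ T then M i j else m i j with hAT
  have hbox : ∀ T, ∀ i j, AT T i j ∈ Set.Icc (m i j) (M i j) := by
    intro T i j
    by_cases h : (i, j) ∈ T <;> simp [hAT, h, hle i j, Set.mem_Icc, le_refl]
  have h0 : ∑ T ∈ P.powerset, (-1 : ℝ) ^ ((P \ T).card) * (AT T).det = 0 := by
    apply Finset.sum_eq_zero; intro T _; rw [hdet (AT T) (hbox T), mul_zero]
  have hper : ∀ σ : Equiv.Perm (Fin p),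
      ∑ T ∈ P.powerset, (-1 : ℝ) ^ ((P \ T).card) * (sgn σ * ∏ i, AT T i (σ i))
      = (∏ q ∈ P, (M q.1 q.2 - m q.1 q.2)) *
          (if Ext P σ then sgn σ * ∏ i ∈ (rws P)ᶜ, m i (σ i) else 0) := by
    intro σ
    set u : Fin p × Fin p → ℝ :=
      fun q => if σ q.1 = q.2 then M q.1 q.2 else m q.1 (σ q.1) with hu
    set v : Fin p × Fin p → ℝ := fun q => m q.1 (σ q.1) with hv
    have hprodT : ∀ T ∈ P.powerset,
        (∏ i, AT T i (σ i))
          = (∏ q ∈ T, u q) * (∏ q ∈ P \ T, v q) * ∏ i ∈ (rws P)ᶜ, m i (σ i) := by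
      intro T hT'
      have hTP : T ⊆ P := Finset.mem_powerset.mp hT'
      rw [← Finset.prod_mul_prod_compl (rws P) (fun i => AT T i (σ i))]
      congr 1
      · have hinj : ∀ a ∈ P, ∀ b ∈ P, Prod.fst a = Prod.fst b → a = b := hP.1
        rw [rws, Finset.prod_image hinj]
        have hsplit : ∏ q ∈ P, AT T q.1 (σ q.1)
            = ∏ q ∈ T ∪ (P \ T), AT T q.1 (σ q.1) := by
          rw [Finset.union_sdiff_of_subset hTP]
        rw [hsplit, Finset.prod_union Finset.disjoint_sdiff]
        congr 1
        · apply Finset.prod_congr rfl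
          intro q hq
          have hqP : q ∈ P := hTP hq
          by_cases hs : σ q.1 = q.2
          · have hmem : (q.1, σ q.1) ∈ T := by rw [hs, Prod.mk.eta]; exact hq
            simp only [hAT, hu]
            rw [if_pos hmem, if_pos hs, hs]
          · have hnmem : (q.1, σ q.1) ∉ T := by
              intro hmem
              have heq := hP.1 _ (hTP hmem) _ hqP rfl
              exact hs (congrArg Prod.snd heq)
            simp only [hAT, hu]
            rw [if_neg hnmem, if_neg hs]
        · apply Finset.prod_congr rfl
          intro q hq
          have hqT : q ∉ T := (Finset.mem_sdiff.mp hq).2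
          have hqP : q ∈ P := (Finset.mem_sdiff.mp hq).1
          have hnmem : (q.1, σ q.1) ∉ T := by
            intro hmem
            have heq := hP.1 _ (hTP hmem) _ hqP rfl
            rw [heq] at hmem
            exact hqT hmem
          simp only [hAT, hv]
          rw [if_neg hnmem]
      · apply Finset.prod_congr rfl
        intro i hi
        have : (i, σ i) ∉ T := by
          intro hmem
          have : i ∈ rws P := Finset.mem_image.mpr ⟨(i, σ i), hTP hmem, rfl⟩
          exact (Finset.mem_compl.mp hi) this
        simp only [hAT, if_neg this]
    have halt : ∑ T ∈ P.powerset, (-1 : ℝ) ^ ((P \ T).card) * ((∏ q ∈ T, u q) * ∏ q ∈ P \ T, v q)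
        = ∏ q ∈ P, (u q - v q) := by
      have := Finset.prod_add u (fun q => -v q) P
      simp only [← sub_eq_add_neg] at this
      rw [this]
      have hneg : ∀ s : Finset (Fin p × Fin p),
          ∏ q ∈ s, (-v q) = (-1 : ℝ) ^ s.card * ∏ q ∈ s, v q := by
        intro s
        calc ∏ q ∈ s, -v q = ∏ q ∈ s, ((-1) * v q) := by simp
          _ = (∏ _q ∈ s, (-1 : ℝ)) * ∏ q ∈ s, v q := Finset.prod_mul_distrib
          _ = _ := by rw [Finset.prod_const]
      apply Finset.sum_congr rfl
      intro T _
      rw [hneg]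
      ring
    have huv : ∏ q ∈ P, (u q - v q)
        = if Ext P σ then ∏ q ∈ P, (M q.1 q.2 - m q.1 q.2) else 0 := by
      by_cases he : Ext P σ
      · rw [if_pos he]
        apply Finset.prod_congr rfl
        intro q hq
        have hs := he q hq
        simp only [hu, hv, if_pos hs, hs]
      · rw [if_neg he]
        simp only [Ext, not_forall] at he
        obtain ⟨q, hq, hs⟩ := he
        apply Finset.prod_eq_zero hq
        simp only [hu, hv, if_neg hs, sub_self]
    calc ∑ T ∈ P.powerset, (-1 : ℝ) ^ ((P \ T).card) * (sgn σ * ∏ i, AT T i (σ i))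
        = ∑ T ∈ P.powerset, ((-1 : ℝ) ^ ((P \ T).card) * ((∏ q ∈ T, u q) * ∏ q ∈ P \ T, v q))
            * (sgn σ * ∏ i ∈ (rws P)ᶜ, m i (σ i)) := by
          apply Finset.sum_congr rfl
          intro T hT'
          rw [hprodT T hT']
          ring
      _ = (∏ q ∈ P, (u q - v q)) * (sgn σ * ∏ i ∈ (rws P)ᶜ, m i (σ i)) := by
          rw [← Finset.sum_mul, halt]
      _ = _ := by
          rw [huv]
          by_cases he : Ext P σ
          · rw [if_pos he, if_pos he]
          · rw [if_neg he, if_neg he, zero_mul, mul_zero]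
  have hswap : ∑ T ∈ P.powerset, (-1 : ℝ) ^ ((P \ T).card) * (AT T).det
      = (∏ q ∈ P, (M q.1 q.2 - m q.1 q.2)) * Dfree m P := by
    calc ∑ T ∈ P.powerset, (-1 : ℝ) ^ ((P \ T).card) * (AT T).det
        = ∑ T ∈ P.powerset, ∑ σ : Equiv.Perm (Fin p),
            (-1 : ℝ) ^ ((P \ T).card) * (sgn σ * ∏ i, AT T i (σ i)) := by
          apply Finset.sum_congr rfl
          intro T _
          rw [det_expand, Finset.mul_sum]
      _ = ∑ σ : Equiv.Perm (Fin p), ∑ T ∈ P.powerset,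
            (-1 : ℝ) ^ ((P \ T).card) * (sgn σ * ∏ i, AT T i (σ i)) := Finset.sum_comm
      _ = ∑ σ : Equiv.Perm (Fin p), (∏ q ∈ P, (M q.1 q.2 - m q.1 q.2)) *
            (if Ext P σ then sgn σ * ∏ i ∈ (rws P)ᶜ, m i (σ i) else 0) := by
          apply Finset.sum_congr rfl
          intro σ _
          exact hper σ
      _ = _ := by rw [← Finset.mul_sum]; rfl
  rw [h0] at hswap
  have hne : (∏ q ∈ P, (M q.1 q.2 - m q.1 q.2)) ≠ 0 := by
    apply Finset.prod_ne_zero_iff.mpr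
    intro q hq
    exact sub_ne_zero_of_ne (Ne.symm (hT q hq))
  rcases mul_eq_zero.mp hswap.symm with h | h
  · exact absurd h hne
  · exact h


lemma DD_graph (σ : Equiv.Perm (Fin p)) :
    DD m M (Finset.univ.image fun i => (i, σ i)) = sgn σ := by
  rw [DD]
  have hrws : rws (Finset.univ.image fun i => (i, σ i)) = Finset.univ := by
    apply Finset.eq_univ_of_forall
    intro i
    exact Finset.mem_image.mpr ⟨(i, σ i), Finset.mem_image.mpr ⟨i, Finset.mem_univ i, rfl⟩, rfl⟩
  rw [Finset.sum_eq_single σ]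
  · have hext : Ext (Finset.univ.image fun i => (i, σ i)) σ := by
      rintro q hq
      obtain ⟨i, _, rfl⟩ := Finset.mem_image.mp hq
      rfl
    rw [if_pos ⟨hext, by rw [hrws]; simp⟩, hrws]
    simp
  · intro τ _ hτ
    have : ¬ Ext (Finset.univ.image fun i => (i, σ i)) τ := by
      intro hext
      apply hτ
      apply Equiv.ext
      intro i
      exact hext (i, σ i) (Finset.mem_image.mpr ⟨i, Finset.mem_univ i, rfl⟩)
    rw [if_neg (fun hc => this hc.1)]
  · intro h
    exact absurd (Finset.mem_univ σ) h

lemma exists_IJ (P : Finset (Fin p × Fin p)) (hP : IsPM P) :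
    ∃ (I J : Fin P.card → Fin p), Function.Injective I ∧ Function.Injective J ∧
      P = Finset.univ.image (fun t => (I t, J t)) := by
  set oP := P.equivFin.symm with hoP
  refine ⟨fun t => (oP t : Fin p × Fin p).1, fun t => (oP t : Fin p × Fin p).2, ?_, ?_, ?_⟩
  · intro a b h
    have : ((oP a : Fin p × Fin p)) = ((oP b : Fin p × Fin p)) :=
      hP.1 _ (oP a).2 _ (oP b).2 h
    exact oP.injective (Subtype.coe_injective this)
  · intro a b h
    have : ((oP a : Fin p × Fin p)) = ((oP b : Fin p × Fin p)) :=
      hP.2 _ (oP a).2 _ (oP b).2 h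
    exact oP.injective (Subtype.coe_injective this)
  · ext q
    simp only [Finset.mem_image, Finset.mem_univ, true_and]
    constructor
    · intro hq
      refine ⟨oP.symm ⟨q, hq⟩, ?_⟩
      have : oP (oP.symm ⟨q, hq⟩) = ⟨q, hq⟩ := Equiv.apply_symm_apply _ _
      rw [this, Prod.mk.eta]
    · rintro ⟨t, rfl⟩
      rw [Prod.mk.eta]
      exact (oP t).2

lemma bridge (k : ℕ) (I J : Fin k → Fin p) (hI : Function.Injective I)
    (hJ : Function.Injective J) :
    ∃ ε : ℝ, (ε = 1 ∨ ε = -1) ∧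
      DD m M (Finset.univ.image fun t => (I t, J t)) =
        ε * detc (complMatrix m I J hI hJ) (complMatrix M I J hI hJ) := by
  have hkp : k ≤ p := by simpa using Fintype.card_le_of_injective I hI
  have hcardI : ((Finset.univ.image I)ᶜ : Finset (Fin p)).card = p - k := by
    simp [Finset.card_compl, Finset.card_image_of_injective _ hI]
  have hcardJ : ((Finset.univ.image J)ᶜ : Finset (Fin p)).card = p - k := by
    simp [Finset.card_compl, Finset.card_image_of_injective _ hJ]
  set oI := ((Finset.univ.image I)ᶜ : Finset (Fin p)).orderIsoOfFin hcardI with hoI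
  set oJ := ((Finset.univ.image J)ᶜ : Finset (Fin p)).orderIsoOfFin hcardJ with hoJ
  set eI : Fin (p - k) → Fin p := fun x => (oI x : Fin p) with heI
  set eJ : Fin (p - k) → Fin p := fun x => (oJ x : Fin p) with heJ
  have heI_inj : Function.Injective eI := fun a b h =>
    oI.toEquiv.injective (Subtype.coe_injective h)
  have heJ_inj : Function.Injective eJ := fun a b h =>
    oJ.toEquiv.injective (Subtype.coe_injective h)
  have heI_mem : ∀ x, eI x ∈ ((Finset.univ.image I)ᶜ : Finset (Fin p)) := fun x => (oI x).2
  have heJ_mem : ∀ x, eJ x ∈ ((Finset.univ.image J)ᶜ : Finset (Fin p)) := fun x => (oJ x).2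
  have heI_not : ∀ x t, I t ≠ eI x := by
    intro x t h
    have h2 := heI_mem x
    rw [← h] at h2
    exact (Finset.mem_compl.mp h2) (Finset.mem_image.mpr ⟨t, Finset.mem_univ t, rfl⟩)
  have heJ_not : ∀ x t, J t ≠ eJ x := by
    intro x t h
    have h2 := heJ_mem x
    rw [← h] at h2
    exact (Finset.mem_compl.mp h2) (Finset.mem_image.mpr ⟨t, Finset.mem_univ t, rfl⟩)
  have hcard : k + (p - k) = p := by omega
  have hgIbij : Function.Bijective (Sum.elim I eI) := by
    rw [Fintype.bijective_iff_injective_and_card]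
    constructor
    · rintro (a | a) (b | b) h
      · simp only [Sum.elim_inl] at h; exact congrArg Sum.inl (hI h)
      · simp only [Sum.elim_inl, Sum.elim_inr] at h; exact absurd h (heI_not b a)
      · simp only [Sum.elim_inl, Sum.elim_inr] at h; exact absurd h.symm (heI_not a b)
      · simp only [Sum.elim_inr] at h; exact congrArg Sum.inr (heI_inj h)
    · simp [hcard]
  have hgJbij : Function.Bijective (Sum.elim J eJ) := by
    rw [Fintype.bijective_iff_injective_and_card]
    constructor
    · rintro (a | a) (b | b) h
      · simp only [Sum.elim_inl] at h; exact congrArg Sum.inl (hJ h)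
      · simp only [Sum.elim_inl, Sum.elim_inr] at h; exact absurd h (heJ_not b a)
      · simp only [Sum.elim_inl, Sum.elim_inr] at h; exact absurd h.symm (heJ_not a b)
      · simp only [Sum.elim_inr] at h; exact congrArg Sum.inr (heJ_inj h)
    · simp [hcard]
  set gI : (Fin k ⊕ Fin (p - k)) ≃ Fin p := Equiv.ofBijective _ hgIbij with hgI
  set gJ : (Fin k ⊕ Fin (p - k)) ≃ Fin p := Equiv.ofBijective _ hgJbij with hgJ
  set Pi0 : Equiv.Perm (Fin p) := gI.symm.trans gJ with hPi0
  have hPi0_I : ∀ t, Pi0 (I t) = J t := by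
    intro t
    have h1 : gI (Sum.inl t) = I t := rfl
    have h2 : gI.symm (I t) = Sum.inl t := by rw [← h1, Equiv.symm_apply_apply]
    show gJ (gI.symm (I t)) = J t
    rw [h2]; rfl
  have hPi0_e : ∀ x, Pi0 (eI x) = eJ x := by
    intro x
    have h1 : gI (Sum.inr x) = eI x := rfl
    have h2 : gI.symm (eI x) = Sum.inr x := by rw [← h1, Equiv.symm_apply_apply]
    show gJ (gI.symm (eI x)) = eJ x
    rw [h2]; rfl
  set embI : Fin (p - k) ↪ Fin p := ⟨eI, heI_inj⟩ with hembI
  set Phi : Equiv.Perm (Fin (p - k)) → Equiv.Perm (Fin p) :=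
    fun σ' => Pi0 * (σ'.viaFintypeEmbedding embI) with hPhi
  have hPhi_e : ∀ σ' x, Phi σ' (eI x) = eJ (σ' x) := by
    intro σ' x
    show Pi0 ((σ'.viaFintypeEmbedding embI) (embI x)) = eJ (σ' x)
    rw [Equiv.Perm.viaFintypeEmbedding_apply_image]
    exact hPi0_e (σ' x)
  have hPhi_I : ∀ σ' t, Phi σ' (I t) = J t := by
    intro σ' t
    have hnr : I t ∉ Set.range embI := by
      rintro ⟨x, hx⟩
      exact heI_not x t hx.symm
    show Pi0 ((σ'.viaFintypeEmbedding embI) (I t)) = J t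
    rw [Equiv.Perm.viaFintypeEmbedding_apply_notMem_range σ' embI hnr]
    exact hPi0_I t
  have hPhi_sign : ∀ σ', sgn (Phi σ') = sgn Pi0 * sgn σ' := by
    intro σ'
    show sgn (Pi0 * σ'.viaFintypeEmbedding embI) = sgn Pi0 * sgn σ'
    rw [sgn_mul]
    congr 1
    unfold sgn
    rw [Equiv.Perm.viaFintypeEmbedding_sign]
  have hPhi_inj : Function.Injective Phi := by
    intro a b h
    apply Equiv.ext
    intro x
    have h2 : Phi a (eI x) = Phi b (eI x) := DFunLike.congr_fun h (eI x)
    rw [hPhi_e a x, hPhi_e b x] at h2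
    exact heJ_inj h2
  set P : Finset (Fin p × Fin p) := Finset.univ.image (fun t => (I t, J t)) with hPdef
  have hrwsP : rws P = Finset.univ.image I := by
    rw [hPdef, rws, Finset.image_image]
    rfl
  have hextP : ∀ σ : Equiv.Perm (Fin p), Ext P σ ↔ ∀ t, σ (I t) = J t := by
    intro σ
    constructor
    · intro h t
      exact h (I t, J t) (Finset.mem_image.mpr ⟨t, Finset.mem_univ t, rfl⟩)
    · rintro h q hq
      obtain ⟨t, _, rfl⟩ := Finset.mem_image.mp hq
      exact h t
  have himgeI : ((Finset.univ.image I)ᶜ : Finset (Fin p)) = Finset.univ.image eI := by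
    symm
    apply Finset.eq_of_subset_of_card_le
    · intro i hi
      obtain ⟨x, _, rfl⟩ := Finset.mem_image.mp hi
      exact heI_mem x
    · rw [hcardI, Finset.card_image_of_injective _ heI_inj, Finset.card_univ, Fintype.card_fin]
  have hfilter : Finset.univ.filter (fun σ : Equiv.Perm (Fin p) => Ext P σ)
      = Finset.univ.image Phi := by
    ext σ
    simp only [Finset.mem_filter, Finset.mem_univ, true_and, Finset.mem_image]
    constructor
    · intro hσ
      have hmem : ∀ x, σ (eI x) ∈ ((Finset.univ.image J)ᶜ : Finset (Fin p)) := by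
        intro x
        rw [Finset.mem_compl]
        intro hc
        obtain ⟨t, _, ht⟩ := Finset.mem_image.mp hc
        have h1 : σ (I t) = J t := (hextP σ).mp hσ t
        have h2 : σ (I t) = σ (eI x) := by rw [h1, ht]
        exact heI_not x t (σ.injective h2)
      set τ : Fin (p - k) → Fin (p - k) := fun x => oJ.symm ⟨σ (eI x), hmem x⟩ with hτ
      have hτinj : Function.Injective τ := by
        intro a b h
        rw [hτ] at h
        simp only at h
        have h2 := oJ.symm.injective h
        have h3 : σ (eI a) = σ (eI b) := congrArg Subtype.val h2
        exact heI_inj (σ.injective h3)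
      have hτbij := Finite.injective_iff_bijective.mp hτinj
      refine ⟨Equiv.ofBijective τ hτbij, ?_⟩
      apply Equiv.ext
      intro i
      by_cases hi : i ∈ Finset.univ.image I
      · obtain ⟨t, _, rfl⟩ := Finset.mem_image.mp hi
        rw [hPhi_I]
        exact ((hextP σ).mp hσ t).symm
      · set x := oI.symm ⟨i, Finset.mem_compl.mpr hi⟩ with hx
        have hxi : eI x = i :=
          congrArg Subtype.val (oI.apply_symm_apply ⟨i, Finset.mem_compl.mpr hi⟩)
        rw [← hxi, hPhi_e]
        show eJ (τ x) = σ (eI x)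
        exact congrArg Subtype.val (oJ.apply_symm_apply ⟨σ (eI x), hmem x⟩)
    · rintro ⟨σ', rfl⟩
      exact (hextP _).mpr (fun t => hPhi_I σ' t)
  have hcompl_m : ∀ x y, complMatrix m I J hI hJ x y = m (eI x) (eJ y) := fun x y => rfl
  have hcompl_M : ∀ x y, complMatrix M I J hI hJ x y = M (eI x) (eJ y) := fun x y => rfl
  refine ⟨sgn Pi0, sgn_eq_or Pi0, ?_⟩
  rw [DD]
  rw [← Finset.sum_filter_add_sum_filter_not Finset.univ (fun σ : Equiv.Perm (Fin p) => Ext P σ)]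
  have hnot : ∑ σ ∈ Finset.univ.filter (fun σ : Equiv.Perm (Fin p) => ¬ Ext P σ),
      (if Ext P σ ∧ ∀ i ∈ (rws P)ᶜ, m i (σ i) = M i (σ i) then
        sgn σ * ∏ i ∈ (rws P)ᶜ, m i (σ i) else 0) = 0 := by
    apply Finset.sum_eq_zero
    intro σ hσ
    exact if_neg (fun hc => (Finset.mem_filter.mp hσ).2 hc.1)
  rw [hnot, add_zero, hfilter, Finset.sum_image (fun a _ b _ h => hPhi_inj h), detc,
    Finset.mul_sum]
  apply Finset.sum_congr rfl
  intro σ' _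
  have hext : Ext P (Phi σ') := (hextP _).mpr (fun t => hPhi_I σ' t)
  have hcondiff : (∀ i ∈ (rws P)ᶜ, m i (Phi σ' i) = M i (Phi σ' i)) ↔
      (∀ x, complMatrix m I J hI hJ x (σ' x) = complMatrix M I J hI hJ x (σ' x)) := by
    rw [hrwsP, himgeI]
    constructor
    · intro h x
      have h2 := h (eI x) (Finset.mem_image.mpr ⟨x, Finset.mem_univ x, rfl⟩)
      rw [hPhi_e] at h2
      rw [hcompl_m, hcompl_M]
      exact h2
    · intro h i hi
      obtain ⟨x, _, rfl⟩ := Finset.mem_image.mp hi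
      rw [hPhi_e]
      have h2 := h x
      rw [hcompl_m, hcompl_M] at h2
      exact h2
  have hprod : ∏ i ∈ (rws P)ᶜ, m i (Phi σ' i) = ∏ x, complMatrix m I J hI hJ x (σ' x) := by
    rw [hrwsP, himgeI, Finset.prod_image (fun a _ b _ h => heI_inj h)]
    apply Finset.prod_congr rfl
    intro x _
    rw [hPhi_e, hcompl_m]
  by_cases hc : ∀ x, complMatrix m I J hI hJ x (σ' x) = complMatrix M I J hI hJ x (σ' x)
  · rw [if_pos ⟨hext, hcondiff.mpr hc⟩, if_pos hc, hPhi_sign, hprod]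
    show sgn Pi0 * sgn σ' * ∏ x, complMatrix m I J hI hJ x (σ' x)
      = sgn Pi0 * (((Equiv.Perm.sign σ' : ℤ) : ℝ) * ∏ x, complMatrix m I J hI hJ x (σ' x))
    unfold sgn
    ring
  · rw [if_neg (fun hcc => hc (hcondiff.mp hcc.2)), if_neg hc, mul_zero]

end IntervalRank

/-- For a p×p interval matrix μ, Mrk(μ) < p iff (1) there is no totally
nonconstant pg-diagonal of length p, and (2) the complementary matrix of every totally
nonconstant pg-diagonal of length k, 0 ≤ k ≤ p−1, has det^c equal to 0. -/
theorem Mrk_lt_iff (p : ℕ) (m M : Matrix (Fin p) (Fin p) ℝ)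
    (hle : ∀ i j, m i j ≤ M i j) :
    sSup {r : ℕ | ∃ A : Matrix (Fin p) (Fin p) ℝ,
        (∀ i j, A i j ∈ Set.Icc (m i j) (M i j)) ∧ A.rank = r} < p ↔
      ((¬ ∃ σ : Equiv.Perm (Fin p), ∀ i, m i (σ i) ≠ M i (σ i)) ∧
        ∀ (k : ℕ), k ≤ p - 1 →
          ∀ (I J : Fin k → Fin p) (hI : Function.Injective I)
            (hJ : Function.Injective J),
            (∀ t, m (I t) (J t) ≠ M (I t) (J t)) →
            detc (complMatrix m I J hI hJ) (complMatrix M I J hI hJ) = 0) := by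
  classical
  have hbm : ∀ i j, m i j ∈ Set.Icc (m i j) (M i j) := fun i j => ⟨le_rfl, hle i j⟩
  have hRne : {r : ℕ | ∃ A : Matrix (Fin p) (Fin p) ℝ,
      (∀ i j, A i j ∈ Set.Icc (m i j) (M i j)) ∧ A.rank = r}.Nonempty := ⟨m.rank, m, hbm, rfl⟩
  have hbdd : BddAbove {r : ℕ | ∃ A : Matrix (Fin p) (Fin p) ℝ,
      (∀ i j, A i j ∈ Set.Icc (m i j) (M i j)) ∧ A.rank = r} := by
    refine ⟨p, ?_⟩
    rintro r ⟨A, _, rfl⟩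
    exact Matrix.rank_le_width A
  have hfin : {r : ℕ | ∃ A : Matrix (Fin p) (Fin p) ℝ,
      (∀ i j, A i j ∈ Set.Icc (m i j) (M i j)) ∧ A.rank = r}.Finite := by
    apply Set.Finite.subset (Set.finite_Iic p)
    rintro r ⟨A, _, rfl⟩
    exact Matrix.rank_le_width A
  rw [Set.Finite.csSup_lt_iff hfin hRne]
  have hiff : (∀ r ∈ {r : ℕ | ∃ A : Matrix (Fin p) (Fin p) ℝ,
        (∀ i j, A i j ∈ Set.Icc (m i j) (M i j)) ∧ A.rank = r}, r < p) ↔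
      ∀ A : Matrix (Fin p) (Fin p) ℝ,
        (∀ i j, A i j ∈ Set.Icc (m i j) (M i j)) → A.det = 0 := by
    constructor
    · intro h A hA
      exact (IntervalRank.rank_lt_iff_det A).mp (h A.rank ⟨A, hA, rfl⟩)
    · rintro h r ⟨A, hA, rfl⟩
      exact (IntervalRank.rank_lt_iff_det A).mpr (h A hA)
  rw [hiff]
  constructor
  · intro hall
    have H := IntervalRank.DD_eq_zero m M
      (fun P hP hT => IntervalRank.Dfree_eq_zero m M hle hall P hP hT)
    constructor
    · rintro ⟨σ, hσ⟩
      have hPM : IntervalRank.IsPM (Finset.univ.image fun i => (i, σ i)) := by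
        constructor
        · rintro a ha b hb hab
          obtain ⟨i, _, rfl⟩ := Finset.mem_image.mp ha
          obtain ⟨i', _, rfl⟩ := Finset.mem_image.mp hb
          simp only at hab
          subst hab; rfl
        · rintro a ha b hb hab
          obtain ⟨i, _, rfl⟩ := Finset.mem_image.mp ha
          obtain ⟨i', _, rfl⟩ := Finset.mem_image.mp hb
          simp only at hab
          have := σ.injective hab; subst this; rfl
      have hTN : IntervalRank.TN m M (Finset.univ.image fun i => (i, σ i)) := by
        rintro q hq
        obtain ⟨i, _, rfl⟩ := Finset.mem_image.mp hq
        exact hσ i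
      have h0 := H _ hPM hTN
      rw [IntervalRank.DD_graph m M σ] at h0
      exact IntervalRank.sgn_ne_zero σ h0
    · intro k hk I J hI hJ htn
      have hPM : IntervalRank.IsPM (Finset.univ.image fun t => (I t, J t)) := by
        constructor
        · rintro a ha b hb hab
          obtain ⟨t, _, rfl⟩ := Finset.mem_image.mp ha
          obtain ⟨t', _, rfl⟩ := Finset.mem_image.mp hb
          simp only at hab
          have := hI hab; subst this; rfl
        · rintro a ha b hb hab
          obtain ⟨t, _, rfl⟩ := Finset.mem_image.mp ha
          obtain ⟨t', _, rfl⟩ := Finset.mem_image.mp hb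
          simp only at hab
          have := hJ hab; subst this; rfl
      have hTN : IntervalRank.TN m M (Finset.univ.image fun t => (I t, J t)) := by
        rintro q hq
        obtain ⟨t, _, rfl⟩ := Finset.mem_image.mp hq
        exact htn t
      obtain ⟨ε, hε, heq⟩ := IntervalRank.bridge m M k I J hI hJ
      have h0 := H _ hPM hTN
      rw [heq] at h0
      rcases hε with rfl | rfl
      · simpa using h0
      · simpa using h0
  · rintro ⟨h1, h2⟩
    apply IntervalRank.det_eq_zero_of_DD m M
    intro P hP hT
    obtain ⟨I, J, hI, hJ, hPeq⟩ := IntervalRank.exists_IJ P hP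
    by_cases hc : P.card = p
    · exfalso
      apply h1
      have hbI : Function.Bijective I :=
        (Fintype.bijective_iff_injective_and_card I).mpr ⟨hI, by simp [hc]⟩
      have hbJ : Function.Bijective J :=
        (Fintype.bijective_iff_injective_and_card J).mpr ⟨hJ, by simp [hc]⟩
      set eqI := Equiv.ofBijective I hbI with heqI
      set eqJ := Equiv.ofBijective J hbJ with heqJ
      refine ⟨eqI.symm.trans eqJ, ?_⟩
      intro i
      have h3 : I (eqI.symm i) = i := eqI.apply_symm_apply i
      have hmem : (I (eqI.symm i), J (eqI.symm i)) ∈ Finset.univ.image (fun t => (I t, J t)) :=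
        Finset.mem_image.mpr ⟨_, Finset.mem_univ _, rfl⟩
      rw [← hPeq] at hmem
      have h4 := hT _ hmem
      simp only at h4
      rw [h3] at h4
      exact h4
    · have hcard_le : P.card ≤ p := by
        simpa using Fintype.card_le_of_injective I hI
      have hk : P.card ≤ p - 1 := by omega
      obtain ⟨ε, hε, heq⟩ := IntervalRank.bridge m M P.card I J hI hJ
      have htn : ∀ t, m (I t) (J t) ≠ M (I t) (J t) := by
        intro t
        have hmemb : (I t, J t) ∈ Finset.univ.image (fun t => (I t, J t)) :=
          Finset.mem_image.mpr ⟨t, Finset.mem_univ t, rfl⟩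
        rw [← hPeq] at hmemb
        exact hT (I t, J t) hmemb
      rw [hPeq, heq, h2 P.card hk I J hI hJ htn, mul_zero]
end

section
/- Let μ be a p×q interval matrix. Then Mrk(μ) equals the maximum of the natural numbers t such that there is a t×t submatrix ν of μ (given by t rows and t columns of μ) with either a totally nonconstant pg-diagonal of length t, or a totally nonconstant pg-diagonal of some length k with 0 ≤ k ≤ t−1 whose complementary matrix has det^c ≠ 0. -/
/-- A t×t interval matrix (with bounds `a ≤ b`) is *good* if it has a totally nonconstant
pg-diagonal of length t, or a totally nonconstant pg-diagonal of some length
0 ≤ k ≤ t−1 whose complementary matrix has det^c ≠ 0. -/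
def IsGoodSquare {t : ℕ} (a b : Matrix (Fin t) (Fin t) ℝ) : Prop :=
  (∃ σ : Equiv.Perm (Fin t), ∀ i, a i (σ i) ≠ b i (σ i)) ∨
    (∃ (k : ℕ) (_ : k ≤ t - 1) (I J : Fin k → Fin t)
        (hI : Function.Injective I) (hJ : Function.Injective J),
      (∀ i, a (I i) (J i) ≠ b (I i) (J i)) ∧
        detc (complMatrix a I J hI hJ) (complMatrix b I J hI hJ) ≠ 0)

/-!
Since the rank of a matrix is the size of its largest nonsingular square submatrix, `Mrk(μ)` is the
largest `t` such that some `t × t` submatrix of `μ` contains a nonsingular matrix.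

For a square interval matrix, the determinant of a member is a polynomial of degree at most one in
each nonconstant entry `x i j`. By multilinearity in the rows, the coefficient of
`∏ i ∈ T, x i (g i)` is the determinant of the constant part (nonconstant entries replaced by `0`)
with each row `i ∈ T` replaced by the unit row `e (g i)`; block elimination identifies it, up to
sign, with `det^c` of the complementary matrix. A polynomial of degree at most one in each variable
is nonzero somewhere on a box iff one of its coefficients is nonzero: fixing a nonconstant entry at
either endpoint of its interval, both sides of this equivalence split into the two fixed cases.
-/

lemma eq_zero_of_add_mul_eq_zero_of_ne {K : Type*} [Field K] {x y c₁ c₂ : K}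
    (h₁ : x + c₁ * y = 0) (h₂ : x + c₂ * y = 0) (hc : c₁ ≠ c₂) : x = 0 ∧ y = 0 := by
  have hy : y = 0 := by
    have : (c₁ - c₂) * y = 0 := by linear_combination h₁ - h₂
    exact (mul_eq_zero.mp this).resolve_left (sub_ne_zero.mpr hc)
  exact ⟨by simpa [hy] using h₁, hy⟩

namespace Matrix

section Field

variable {K m n : Type*} [Field K] [Fintype n]

lemma det_updateRow_add_smul [DecidableEq n] (M : Matrix n n K) (i : n) (u v : n → K) (c : K) :
    (M.updateRow i (u + c • v)).det = (M.updateRow i u).det + c * (M.updateRow i v).det := by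
  rw [det_updateRow_add, det_updateRow_smul]

lemma det_submatrix_equiv_ne_zero_iff {ι : Type*} [Fintype ι] [DecidableEq ι] [DecidableEq n]
    (M : Matrix n n K) (e f : ι ≃ n) : (M.submatrix e f).det ≠ 0 ↔ M.det ≠ 0 := by
  simp only [← isUnit_iff_ne_zero, ← isUnit_iff_isUnit_det, isUnit_submatrix_equiv]

lemma le_rank_of_submatrix_det_ne_zero {ι : Type*} [Fintype ι] [DecidableEq ι] (A : Matrix m n K)
    (I : ι → m) (J : ι → n) (h : (A.submatrix I J).det ≠ 0) : Fintype.card ι ≤ A.rank :=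
  (rank_of_det_ne_zero h).symm.le.trans (rank_submatrix_le A I J)

lemma exists_linearIndependent_rows [Fintype m] (A : Matrix m n K) {r : ℕ} (hr : A.rank = r) :
    ∃ I : Fin r → m, Function.Injective I ∧ LinearIndependent K (A.row ∘ I) := by
  obtain ⟨κ, f, hf, hspan, hli⟩ := exists_linearIndependent' K A.row
  have : Fintype κ := Fintype.ofInjective f hf
  have hcard : Fintype.card κ = r := by
    rw [← hr, rank_eq_finrank_span_row, ← hspan, finrank_span_eq_card hli]
  let e : Fin r ≃ κ := (Fintype.equivFinOfCardEq hcard).symm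
  exact ⟨f ∘ e, hf.comp e.injective, hli.comp e e.injective⟩

lemma exists_submatrix_det_ne_zero [Fintype m] (A : Matrix m n K) :
    ∃ (I : Fin A.rank → m) (J : Fin A.rank → n), Function.Injective I ∧ Function.Injective J ∧
      (A.submatrix I J).det ≠ 0 := by
  obtain ⟨I, hI, hrows⟩ := exists_linearIndependent_rows A rfl
  have hB : (A.submatrix I id)ᵀ.rank = A.rank := by
    rw [rank_transpose, LinearIndependent.rank_matrix (M := A.submatrix I id) hrows,
      Fintype.card_fin]
  obtain ⟨J, hJ, hcols⟩ := exists_linearIndependent_rows _ hB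
  have hunit : IsUnit (A.submatrix I J) := linearIndependent_cols_iff_isUnit.1 hcols
  exact ⟨I, J, hI, hJ, ((isUnit_iff_isUnit_det _).1 hunit).ne_zero⟩

end Field

lemma exists_mem_Icc_submatrix_eq {α m n ι κ : Type*} [Preorder α] {a b : Matrix m n α}
    (hle : ∀ i j, a i j ≤ b i j) {I : ι → m} {J : κ → n} (hI : Function.Injective I)
    (hJ : Function.Injective J) {B : Matrix ι κ α}
    (hB : ∀ x y, B x y ∈ Set.Icc (a (I x) (J y)) (b (I x) (J y))) :
    ∃ A : Matrix m n α, (∀ i j, A i j ∈ Set.Icc (a i j) (b i j)) ∧ A.submatrix I J = B := by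
  let A : Matrix m n α :=
    Matrix.of fun i j => Function.extend I (fun x => Function.extend J (B x) (a (I x)) j) (a · j) i
  refine ⟨A, fun i j => ?_, by ext x y; simp [A, hI.extend_apply, hJ.extend_apply]⟩
  by_cases hi : ∃ x, I x = i
  · obtain ⟨x, rfl⟩ := hi
    by_cases hj : ∃ y, J y = j
    · obtain ⟨y, rfl⟩ := hj
      simpa [A, hI.extend_apply, hJ.extend_apply] using hB x y
    · simpa [A, hI.extend_apply, Function.extend_apply' _ _ _ hj] using hle (I x) j
  · simpa [A, Function.extend_apply' _ _ _ hi] using hle i j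

end Matrix

namespace IntervalMatrix

open Matrix

section SetEntry

variable {α m n : Type*} [DecidableEq m] [DecidableEq n]

def setEntry (A : Matrix m n α) (i₀ : m) (j₀ : n) (c : α) : Matrix m n α :=
  A.updateRow i₀ (Function.update (A i₀) j₀ c)

lemma setEntry_apply (A : Matrix m n α) (i₀ : m) (j₀ : n) (c : α) (i : m) (j : n) :
    setEntry A i₀ j₀ c i j = if i = i₀ ∧ j = j₀ then c else A i j := by
  by_cases hi : i = i₀
  · subst hi
    by_cases hj : j = j₀ <;> simp [setEntry, hj]
  · simp [setEntry, hi]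

lemma setEntry_le_setEntry [Preorder α] {a b : Matrix m n α} (hle : ∀ i j, a i j ≤ b i j)
    (i₀ : m) (j₀ : n) (c : α) (i : m) (j : n) :
    setEntry a i₀ j₀ c i j ≤ setEntry b i₀ j₀ c i j := by
  simp only [setEntry_apply]
  split_ifs
  exacts [le_rfl, hle i j]

lemma setEntry_ne_setEntry_iff {a b : Matrix m n α} {i₀ : m} {j₀ : n} {c : α} {i : m} {j : n}
    (h : ¬(i = i₀ ∧ j = j₀)) :
    setEntry a i₀ j₀ c i j ≠ setEntry b i₀ j₀ c i j ↔ a i j ≠ b i j := by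
  simp [setEntry_apply, h]

def nonconstEntries [Fintype m] [Fintype n] [DecidableEq α] (a b : Matrix m n α) :
    Finset (m × n) :=
  {e | a e.1 e.2 ≠ b e.1 e.2}

lemma nonconstEntries_setEntry [Fintype m] [Fintype n] [DecidableEq α] {a b : Matrix m n α}
    (i₀ : m) (j₀ : n) (c : α) :
    nonconstEntries (setEntry a i₀ j₀ c) (setEntry b i₀ j₀ c) =
      (nonconstEntries a b).erase (i₀, j₀) := by
  ext ⟨i, j⟩
  by_cases hij : i = i₀ ∧ j = j₀
  · obtain ⟨rfl, rfl⟩ := hij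
    simp [nonconstEntries, setEntry_apply]
  · have : (i, j) ≠ (i₀, j₀) := fun h => hij (Prod.mk.inj h)
    simp [nonconstEntries, setEntry_ne_setEntry_iff hij, this]

end SetEntry

lemma det_setEntry {K n : Type*} [Field K] [Fintype n] [DecidableEq n] (A : Matrix n n K)
    (i₀ j₀ : n) (x : K) :
    (setEntry A i₀ j₀ x).det =
      A.det + (x - A i₀ j₀) * (A.updateRow i₀ (Pi.single j₀ 1)).det := by
  have : setEntry A i₀ j₀ x = A.updateRow i₀ (A i₀ + (x - A i₀ j₀) • Pi.single j₀ 1) := by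
    ext i j
    by_cases hj : j = j₀ <;> by_cases hi : i = i₀ <;> simp [setEntry_apply, hi, hj]
  rw [this, det_updateRow_add_smul, updateRow_eq_self]

section NonsingularMember

variable {K n : Type*} [Field K] [PartialOrder K] [Fintype n] [DecidableEq n]

def HasNonsingularMember (a b : Matrix n n K) : Prop :=
  ∃ A : Matrix n n K, (∀ i j, A i j ∈ Set.Icc (a i j) (b i j)) ∧ A.det ≠ 0

variable {a b : Matrix n n K} {i₀ j₀ : n}

lemma hasNonsingularMember_self_iff : HasNonsingularMember a a ↔ a.det ≠ 0 := by
  refine ⟨fun ⟨A, hA, hdet⟩ => ?_, fun h => ⟨a, fun i j => Set.left_mem_Icc.2 le_rfl, h⟩⟩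
  obtain rfl : A = a := by ext i j; exact le_antisymm (hA i j).2 (hA i j).1
  exact hdet

lemma HasNonsingularMember.of_setEntry {c : K} (hc : c ∈ Set.Icc (a i₀ j₀) (b i₀ j₀))
    (h : HasNonsingularMember (setEntry a i₀ j₀ c) (setEntry b i₀ j₀ c)) :
    HasNonsingularMember a b := by
  obtain ⟨A, hA, hdet⟩ := h
  refine ⟨A, fun i j => ?_, hdet⟩
  have hAij := hA i j
  simp only [setEntry_apply] at hAij
  split_ifs at hAij with hij
  · obtain ⟨rfl, rfl⟩ := hij
    rwa [le_antisymm hAij.2 hAij.1]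
  · exact hAij

lemma hasNonsingularMember_iff_setEntry (hle : ∀ i j, a i j ≤ b i j) (hne : a i₀ j₀ ≠ b i₀ j₀) :
    HasNonsingularMember a b ↔
      HasNonsingularMember (setEntry a i₀ j₀ (a i₀ j₀)) (setEntry b i₀ j₀ (a i₀ j₀)) ∨
        HasNonsingularMember (setEntry a i₀ j₀ (b i₀ j₀)) (setEntry b i₀ j₀ (b i₀ j₀)) := by
  refine ⟨fun ⟨A, hA, hdet⟩ => ?_, fun h => h.elim (.of_setEntry ⟨le_rfl, hle _ _⟩)
    (.of_setEntry ⟨hle _ _, le_rfl⟩)⟩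
  have hbox (c : K) (i j : n) :
      setEntry A i₀ j₀ c i j ∈ Set.Icc (setEntry a i₀ j₀ c i j) (setEntry b i₀ j₀ c i j) := by
    simp only [setEntry_apply]
    split_ifs
    exacts [Set.left_mem_Icc.2 le_rfl, hA i j]
  by_contra! hnone
  -- `det (setEntry A i₀ j₀ x)` is affine in `x`; vanishing at both endpoints forces `det A = 0`.
  have hzero (c : K) (hc : ¬HasNonsingularMember (setEntry a i₀ j₀ c) (setEntry b i₀ j₀ c)) :
      A.det - A i₀ j₀ * (A.updateRow i₀ (Pi.single j₀ 1)).det +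
        c * (A.updateRow i₀ (Pi.single j₀ 1)).det = 0 := by
    have : (setEntry A i₀ j₀ c).det = 0 := by_contra fun h => hc ⟨_, hbox c, h⟩
    rw [det_setEntry] at this
    linear_combination this
  obtain ⟨h₁, h₂⟩ := eq_zero_of_add_mul_eq_zero_of_ne (hzero _ hnone.1) (hzero _ hnone.2) hne
  exact hdet (by simpa [h₂] using h₁)

end NonsingularMember

section PartialDiag

variable {K n : Type*} [Field K] [DecidableEq K] [DecidableEq n]

def constPart {m : Type*} (a b : Matrix m n K) : Matrix m n K :=
  Matrix.of fun i j => if a i j = b i j then a i j else 0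

/-- The determinant of this matrix is the coefficient of `∏ i ∈ T, x i (g i)` in `det x`, where
`x` is a member of the interval matrix viewed as a polynomial in its nonconstant entries. -/
def partialDiagMatrix (a b : Matrix n n K) (g : n → n) (T : Finset n) : Matrix n n K :=
  Matrix.of fun i j => if i ∈ T then (Pi.single (g i) 1 : n → K) j else constPart a b i j

def HasNonzeroPartialDiag [Fintype n] (a b : Matrix n n K) : Prop :=
  ∃ (g : n → n) (T : Finset n), (∀ i ∈ T, a i (g i) ≠ b i (g i)) ∧
    (partialDiagMatrix a b g T).det ≠ 0

variable {a b : Matrix n n K} {i₀ j₀ : n}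

lemma partialDiagMatrix_setEntry_of_mem (c : K) (g : n → n) {T : Finset n} (hT : i₀ ∈ T) :
    partialDiagMatrix (setEntry a i₀ j₀ c) (setEntry b i₀ j₀ c) g T =
      partialDiagMatrix a b g T := by
  ext i j
  by_cases hi : i ∈ T
  · simp [partialDiagMatrix, hi]
  · have : i ≠ i₀ := by rintro rfl; exact hi hT
    simp [partialDiagMatrix, constPart, hi, setEntry_apply, this]

variable [Fintype n]

lemma det_partialDiagMatrix_setEntry_of_notMem (hne : a i₀ j₀ ≠ b i₀ j₀) (c : K) (g : n → n)
    {T : Finset n} (hT : i₀ ∉ T) :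
    (partialDiagMatrix (setEntry a i₀ j₀ c) (setEntry b i₀ j₀ c) g T).det =
      (partialDiagMatrix a b g T).det +
        c * (partialDiagMatrix a b (Function.update g i₀ j₀) (insert i₀ T)).det := by
  set P := partialDiagMatrix a b g T
  have hP : P i₀ = constPart a b i₀ := by ext j; simp [P, partialDiagMatrix, hT]
  have hc : partialDiagMatrix (setEntry a i₀ j₀ c) (setEntry b i₀ j₀ c) g T =
      P.updateRow i₀ (constPart a b i₀ + c • Pi.single j₀ 1) := by
    ext i j
    by_cases hi : i = i₀
    · subst hi
      by_cases hj : j = j₀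
      · subst hj
        simp [partialDiagMatrix, constPart, hT, setEntry_apply, hne]
      · simp [partialDiagMatrix, constPart, hT, setEntry_apply, hj]
    · simp [P, partialDiagMatrix, constPart, setEntry_apply, hi]
  have hins : partialDiagMatrix a b (Function.update g i₀ j₀) (insert i₀ T) =
      P.updateRow i₀ (Pi.single j₀ 1) := by
    ext i j
    by_cases hi : i = i₀
    · subst hi
      simp [partialDiagMatrix]
    · simp [P, partialDiagMatrix, hi]
  rw [hc, hins, det_updateRow_add_smul, ← hP, updateRow_eq_self]

lemma HasNonzeroPartialDiag.of_setEntry (hne : a i₀ j₀ ≠ b i₀ j₀) {c : K}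
    (h : HasNonzeroPartialDiag (setEntry a i₀ j₀ c) (setEntry b i₀ j₀ c)) :
    HasNonzeroPartialDiag a b := by
  obtain ⟨g, T, hnc, hdet⟩ := h
  by_cases hT : i₀ ∈ T
  · have hg : g i₀ ≠ j₀ := fun hg => hnc i₀ hT (by simp [setEntry_apply, hg])
    refine ⟨g, T, fun i hi => ?_, by rwa [← partialDiagMatrix_setEntry_of_mem c g hT]⟩
    have hij : ¬(i = i₀ ∧ g i = j₀) := by rintro ⟨rfl, h⟩; exact hg h
    exact (setEntry_ne_setEntry_iff hij).1 (hnc i hi)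
  have hnc' : ∀ i ∈ T, a i (g i) ≠ b i (g i) := fun i hi =>
    (setEntry_ne_setEntry_iff fun h : i = i₀ ∧ g i = j₀ => hT (h.1 ▸ hi)).1 (hnc i hi)
  rw [det_partialDiagMatrix_setEntry_of_notMem hne c g hT] at hdet
  by_cases hD : (partialDiagMatrix a b g T).det = 0
  · refine ⟨Function.update g i₀ j₀, insert i₀ T, fun i hi => ?_, ?_⟩
    · rcases Finset.mem_insert.1 hi with rfl | hi
      · simpa using hne
      · have : i ≠ i₀ := fun h => hT (h ▸ hi)
        simpa [this] using hnc' i hi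
    · exact right_ne_zero_of_mul (by simpa [hD] using hdet)
  · exact ⟨g, T, hnc', hD⟩

lemma hasNonzeroPartialDiag_setEntry_of_notMem (hne : a i₀ j₀ ≠ b i₀ j₀) {g : n → n}
    {T : Finset n} (hT : i₀ ∉ T) (hnc : ∀ i ∈ T, a i (g i) ≠ b i (g i))
    (hD : (partialDiagMatrix a b g T).det ≠ 0 ∨
      (partialDiagMatrix a b (Function.update g i₀ j₀) (insert i₀ T)).det ≠ 0) :
    HasNonzeroPartialDiag (setEntry a i₀ j₀ (a i₀ j₀)) (setEntry b i₀ j₀ (a i₀ j₀)) ∨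
      HasNonzeroPartialDiag (setEntry a i₀ j₀ (b i₀ j₀)) (setEntry b i₀ j₀ (b i₀ j₀)) := by
  by_contra! hnone
  have hzero (c : K) (hc : ¬HasNonzeroPartialDiag (setEntry a i₀ j₀ c) (setEntry b i₀ j₀ c)) :
      (partialDiagMatrix a b g T).det +
        c * (partialDiagMatrix a b (Function.update g i₀ j₀) (insert i₀ T)).det = 0 := by
    rw [← det_partialDiagMatrix_setEntry_of_notMem hne c g hT]
    by_contra h
    refine hc ⟨g, T, fun i hi => ?_, h⟩
    exact (setEntry_ne_setEntry_iff fun h : i = i₀ ∧ g i = j₀ => hT (h.1 ▸ hi)).2 (hnc i hi)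
  obtain ⟨h₁, h₂⟩ := eq_zero_of_add_mul_eq_zero_of_ne (hzero _ hnone.1) (hzero _ hnone.2) hne
  exact hD.elim (· h₁) (· h₂)

lemma hasNonzeroPartialDiag_iff_setEntry (hne : a i₀ j₀ ≠ b i₀ j₀) :
    HasNonzeroPartialDiag a b ↔
      HasNonzeroPartialDiag (setEntry a i₀ j₀ (a i₀ j₀)) (setEntry b i₀ j₀ (a i₀ j₀)) ∨
        HasNonzeroPartialDiag (setEntry a i₀ j₀ (b i₀ j₀)) (setEntry b i₀ j₀ (b i₀ j₀)) := by
  refine ⟨fun ⟨g, T, hnc, hdet⟩ => ?_, fun h => h.elim (.of_setEntry hne) (.of_setEntry hne)⟩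
  by_cases hT : i₀ ∈ T
  · by_cases hg : g i₀ = j₀
    · refine hasNonzeroPartialDiag_setEntry_of_notMem hne (Finset.notMem_erase i₀ T)
        (fun i hi => hnc i (Finset.mem_of_mem_erase hi)) (.inr ?_)
      rwa [Function.update_eq_self_iff.2 hg.symm, Finset.insert_erase hT]
    · refine .inl ⟨g, T, fun i hi => ?_, by rwa [partialDiagMatrix_setEntry_of_mem _ g hT]⟩
      have hij : ¬(i = i₀ ∧ g i = j₀) := by rintro ⟨rfl, h⟩; exact hg h
      exact (setEntry_ne_setEntry_iff hij).2 (hnc i hi)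
  · exact hasNonzeroPartialDiag_setEntry_of_notMem hne hT hnc (.inl hdet)

lemma hasNonzeroPartialDiag_self_iff : HasNonzeroPartialDiag a a ↔ a.det ≠ 0 := by
  have hP (g : n → n) : partialDiagMatrix a a g ∅ = a := by
    ext
    simp [partialDiagMatrix, constPart]
  refine ⟨fun ⟨g, T, hnc, hdet⟩ => ?_, fun h => ⟨id, ∅, by simp, by rwa [hP]⟩⟩
  obtain rfl : T = ∅ := Finset.eq_empty_of_forall_notMem fun i hi => hnc i hi rfl
  rwa [hP] at hdet

lemma injOn_of_det_partialDiagMatrix_ne_zero {g : n → n} {T : Finset n}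
    (h : (partialDiagMatrix a b g T).det ≠ 0) : Set.InjOn g T := by
  intro i hi j hj hij
  by_contra hne
  exact h (det_zero_of_row_eq hne (by
    ext
    simp [partialDiagMatrix, Finset.mem_coe.1 hi, Finset.mem_coe.1 hj, hij]))

theorem hasNonsingularMember_iff_hasNonzeroPartialDiag [PartialOrder K]
    (hle : ∀ i j, a i j ≤ b i j) : HasNonsingularMember a b ↔ HasNonzeroPartialDiag a b := by
  induction h : (nonconstEntries a b).card generalizing a b with
  | zero =>
    have hempty := Finset.card_eq_zero.1 h
    rw [nonconstEntries, Finset.filter_eq_empty_iff] at hempty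
    obtain rfl : a = b := by
      ext i j
      simpa using hempty (Finset.mem_univ (i, j))
    rw [hasNonsingularMember_self_iff, hasNonzeroPartialDiag_self_iff]
  | succ k ih =>
    obtain ⟨⟨i₀, j₀⟩, he⟩ : (nonconstEntries a b).Nonempty := Finset.card_pos.1 (by omega)
    have hne : a i₀ j₀ ≠ b i₀ j₀ := by simpa [nonconstEntries] using he
    have hcard (c : K) :
        (nonconstEntries (setEntry a i₀ j₀ c) (setEntry b i₀ j₀ c)).card = k := by
      rw [nonconstEntries_setEntry, Finset.card_erase_of_mem he, h, Nat.add_sub_cancel]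
    rw [hasNonsingularMember_iff_setEntry hle hne, hasNonzeroPartialDiag_iff_setEntry hne,
      ih (setEntry_le_setEntry hle i₀ j₀ _) (hcard _),
      ih (setEntry_le_setEntry hle i₀ j₀ _) (hcard _)]

end PartialDiag

lemma detc_eq_det_constPart {s : ℕ} (a b : Matrix (Fin s) (Fin s) ℝ) :
    detc a b = (constPart a b).det := by
  rw [← det_transpose, det_apply', detc]
  refine Finset.sum_congr rfl fun σ _ => ?_
  simp only [transpose_apply, constPart, of_apply, Fintype.prod_ite_zero]
  split_ifs <;> simp

section Complement

variable {t k : ℕ} {I : Fin k → Fin t} (hI : Function.Injective I)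

def complEmb : Fin (t - k) → Fin t := fun x =>
  ((Finset.univ.image I)ᶜ.orderIsoOfFin
    (by simp [Finset.card_compl, Finset.card_image_of_injective _ hI]) x : Fin t)

lemma complMatrix_eq_submatrix (a : Matrix (Fin t) (Fin t) ℝ) {J : Fin k → Fin t}
    (hJ : Function.Injective J) :
    complMatrix a I J hI hJ = a.submatrix (complEmb hI) (complEmb hJ) := rfl

lemma complEmb_injective : Function.Injective (complEmb hI) :=
  fun _ _ h => OrderIso.injective _ (Subtype.ext h)

lemma complEmb_notMem_image (x : Fin (t - k)) : complEmb hI x ∉ Finset.univ.image I :=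
  Finset.mem_compl.1 (Subtype.prop _)

lemma apply_ne_complEmb (y : Fin k) (x : Fin (t - k)) : I y ≠ complEmb hI x :=
  fun h => complEmb_notMem_image hI x (h ▸ Finset.mem_image_of_mem I (Finset.mem_univ y))

lemma bijective_sumElim_complEmb : Function.Bijective (Sum.elim I (complEmb hI)) := by
  have hinj : Function.Injective (Sum.elim I (complEmb hI)) :=
    hI.sumElim (complEmb_injective hI) (apply_ne_complEmb hI)
  refine (Fintype.bijective_iff_injective_and_card _).2 ⟨hinj, ?_⟩
  have := Fintype.card_le_of_injective I hI
  simp only [Fintype.card_sum, Fintype.card_fin] at this ⊢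
  omega

noncomputable def sumComplEquiv : Fin k ⊕ Fin (t - k) ≃ Fin t :=
  Equiv.ofBijective _ (bijective_sumElim_complEmb hI)

end Complement

variable {t : ℕ}

lemma det_partialDiagMatrix_ne_zero_iff (a b : Matrix (Fin t) (Fin t) ℝ) {k : ℕ}
    {I J : Fin k → Fin t} (hI : Function.Injective I) (hJ : Function.Injective J)
    {g : Fin t → Fin t} (hg : ∀ x, g (I x) = J x) :
    (partialDiagMatrix a b g (Finset.univ.image I)).det ≠ 0 ↔
      detc (complMatrix a I J hI hJ) (complMatrix b I J hI hJ) ≠ 0 := by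
  have hblock : (partialDiagMatrix a b g (Finset.univ.image I)).submatrix
      (sumComplEquiv hI) (sumComplEquiv hJ) =
        fromBlocks 1 0 ((constPart a b).submatrix (complEmb hI) J)
          (constPart (complMatrix a I J hI hJ) (complMatrix b I J hI hJ)) := by
    ext (x | x) (y | y) <;>
      simp [partialDiagMatrix, sumComplEquiv, complMatrix_eq_submatrix, constPart, hg,
        Pi.single_apply, one_apply, hJ.eq_iff, apply_ne_complEmb, eq_comm]
    rfl
  rw [detc_eq_det_constPart, ← det_submatrix_equiv_ne_zero_iff _ (sumComplEquiv hI)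
    (sumComplEquiv hJ), hblock, det_fromBlocks_zero₁₂, det_one, one_mul]

theorem isGoodSquare_iff_hasNonzeroPartialDiag (a b : Matrix (Fin t) (Fin t) ℝ) :
    IsGoodSquare a b ↔ HasNonzeroPartialDiag a b := by
  constructor
  · rintro (⟨σ, hσ⟩ | ⟨k, -, I, J, hI, hJ, hnc, hdetc⟩)
    · have hperm : partialDiagMatrix a b σ Finset.univ =
          (1 : Matrix (Fin t) (Fin t) ℝ).submatrix σ id := by
        ext i j
        simp [partialDiagMatrix, Pi.single_apply, one_apply, eq_comm]
      refine ⟨σ, Finset.univ, fun i _ => hσ i, ?_⟩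
      rw [hperm, det_permute, det_one, mul_one]
      simp
    · have hg (x : Fin k) : Function.extend I J id (I x) = J x := hI.extend_apply J id x
      refine ⟨Function.extend I J id, Finset.univ.image I, ?_,
        (det_partialDiagMatrix_ne_zero_iff a b hI hJ hg).2 hdetc⟩
      simpa [hg] using hnc
  · rintro ⟨g, T, hnc, hdet⟩
    have hinj := injOn_of_det_partialDiagMatrix_ne_zero hdet
    by_cases hT : T = Finset.univ
    · subst hT
      have hbij : Function.Bijective g :=
        Finite.injective_iff_bijective.1 (Set.injOn_univ.1 (by simpa using hinj))
      exact .inl ⟨Equiv.ofBijective g hbij, fun i => hnc i (Finset.mem_univ i)⟩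
    · have hIT (x : Fin T.card) : T.orderEmbOfFin rfl x ∈ T := T.orderEmbOfFin_mem rfl x
      have hJ : Function.Injective (g ∘ T.orderEmbOfFin rfl) := fun x y h =>
        (T.orderEmbOfFin rfl).injective (hinj (hIT x) (hIT y) h)
      refine .inr ⟨T.card, ?_, T.orderEmbOfFin rfl, _, (T.orderEmbOfFin rfl).injective, hJ,
        fun x => hnc _ (hIT x), ?_⟩
      · have := Finset.card_lt_card (Finset.ssubset_univ_iff.2 hT)
        simp only [Finset.card_univ, Fintype.card_fin] at this
        omega
      · refine (det_partialDiagMatrix_ne_zero_iff a b _ hJ fun _ => rfl).1 ?_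
        rwa [Finset.image_orderEmbOfFin_univ]

theorem hasNonsingularMember_iff_isGoodSquare {a b : Matrix (Fin t) (Fin t) ℝ}
    (hle : ∀ i j, a i j ≤ b i j) : HasNonsingularMember a b ↔ IsGoodSquare a b := by
  rw [isGoodSquare_iff_hasNonzeroPartialDiag, hasNonsingularMember_iff_hasNonzeroPartialDiag hle]

end IntervalMatrix

/-- For a p×q interval matrix μ, Mrk(μ) equals the maximum of the
natural numbers t such that μ has a t×t submatrix which is good in the above sense. -/
theorem Mrk_eq_max_good_submatrix (p q : ℕ) (m M : Matrix (Fin p) (Fin q) ℝ)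
    (hle : ∀ i j, m i j ≤ M i j) :
    sSup {r : ℕ | ∃ A : Matrix (Fin p) (Fin q) ℝ,
        (∀ i j, A i j ∈ Set.Icc (m i j) (M i j)) ∧ A.rank = r} =
      sSup {t : ℕ | ∃ (I : Fin t → Fin p) (J : Fin t → Fin q),
        Function.Injective I ∧ Function.Injective J ∧
          IsGoodSquare (m.submatrix I J) (M.submatrix I J)} := by
  refine csSup_eq_csSup_of_forall_exists_le ?_ ?_
  · rintro _ ⟨A, hA, rfl⟩
    obtain ⟨I, J, hI, hJ, hdet⟩ := A.exists_submatrix_det_ne_zero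
    refine ⟨A.rank, ⟨I, J, hI, hJ, ?_⟩, le_rfl⟩
    exact (IntervalMatrix.hasNonsingularMember_iff_isGoodSquare fun _ _ => hle _ _).1
      ⟨A.submatrix I J, fun _ _ => hA _ _, hdet⟩
  · rintro t ⟨I, J, hI, hJ, hgood⟩
    obtain ⟨B, hB, hdet⟩ :=
      (IntervalMatrix.hasNonsingularMember_iff_isGoodSquare fun _ _ => hle _ _).2 hgood
    obtain ⟨A, hA, rfl⟩ := Matrix.exists_mem_Icc_submatrix_eq hle hI hJ hB
    exact ⟨A.rank, ⟨A, hA, rfl⟩, by simpa using A.le_rank_of_submatrix_det_ne_zero I J hdet⟩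
end

section
/- Let a_i, c_j ∈ ℝ_{≥0} and b_i, z_i, d_j, u_j ∈ ℝ for i, j ∈ {1,…,k}, and suppose a_{ī} ≠ 0 and c_{j̄} ≠ 0 for some ī, j̄ ∈ {1,…,k}. Then there exist λ, γ ∈ ℝ_{≥0} such that for every i and j one has λa_i + γb_i ≤ z_i and λc_j + γd_j ≥ u_j, if and only if for all i, j, r, s ∈ {1,…,k}: (i) b_i ≥ 0 implies z_i ≥ 0; (ii) b_i > 0 and b_j < 0 imply b_i z_j ≥ b_j z_i; (iii) a_i d_r − b_i c_r ≤ 0 implies a_i u_r − c_r z_i ≤ 0; (iv) a_i d_r − b_i c_r < 0 and a_j d_s − b_j c_s > 0 imply (a_i d_r − b_i c_r)(a_j u_s − c_s z_j) ≥ (a_j d_s − b_j c_s)(a_i u_r − c_r z_i); (v) b_j < 0 and a_i d_r − b_i c_r < 0 imply z_j(a_i d_r − b_i c_r) ≤ b_j(a_i u_r − c_r z_i); (vi) b_j > 0 and a_i d_r − b_i c_r > 0 imply z_j(a_i d_r − b_i c_r) ≥ b_j(a_i u_r − c_r z_i). -/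
lemma hdiv1 {x y u v : ℝ} (hx : x < 0) (hv : 0 < v) (h : x * u ≤ v * y) : y / x ≤ u / v := by
  rw [div_le_iff_of_neg hx, div_mul_eq_mul_div, div_le_iff₀ hv]; nlinarith

lemma hdiv2 {x y u v : ℝ} (hx : x < 0) (hv : v < 0) (h : v * y ≤ x * u) : y / x ≤ u / v := by
  rw [div_le_iff_of_neg hx, div_mul_eq_mul_div, div_le_iff_of_neg hv]; nlinarith

lemma hdiv3 {x y u v : ℝ} (hx : x < 0) (hv : 0 < v) (h : y * v ≤ u * x) : u / v ≤ y / x := by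
  rw [le_div_iff_of_neg hx, div_mul_eq_mul_div, le_div_iff₀ hv]; nlinarith

/-- Corollary: with a_i, c_j ≥ 0 and some a_ī ≠ 0, c_j̄ ≠ 0, there exist
λ, γ ≥ 0 with λa_i + γb_i ≤ z_i and λc_j + γd_j ≥ u_j for all i, j, iff the six
conditions (i)–(vi) hold for all i, j, r, s. -/
theorem corollary_system (k : ℕ) (a b z c d u : Fin k → ℝ)
    (ha : ∀ i, 0 ≤ a i) (hc : ∀ j, 0 ≤ c j)
    (ha' : ∃ i, a i ≠ 0) (hc' : ∃ j, c j ≠ 0) :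
    (∃ l g : ℝ, 0 ≤ l ∧ 0 ≤ g ∧
        ∀ i j : Fin k, l * a i + g * b i ≤ z i ∧ u j ≤ l * c j + g * d j) ↔
      ∀ i j r s : Fin k,
        (0 ≤ b i → 0 ≤ z i) ∧
        (0 < b i → b j < 0 → b j * z i ≤ b i * z j) ∧
        (a i * d r - b i * c r ≤ 0 → a i * u r - c r * z i ≤ 0) ∧
        (a i * d r - b i * c r < 0 → 0 < a j * d s - b j * c s →
          (a j * d s - b j * c s) * (a i * u r - c r * z i) ≤
            (a i * d r - b i * c r) * (a j * u s - c s * z j)) ∧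
        (b j < 0 → a i * d r - b i * c r < 0 →
          z j * (a i * d r - b i * c r) ≤ b j * (a i * u r - c r * z i)) ∧
        (0 < b j → 0 < a i * d r - b i * c r →
          b j * (a i * u r - c r * z i) ≤ z j * (a i * d r - b i * c r)) := by
  obtain ⟨i0, hi0⟩ := ha'
  have hi0' : 0 < a i0 := (ha i0).lt_of_ne' hi0
  constructor
  · rintro ⟨l, g, hl, hg, h⟩
    have hz : ∀ i, g * b i ≤ z i := by
      intro i
      have h1 := (h i i).1
      nlinarith [mul_nonneg hl (ha i)]
    have hQ : ∀ i r, a i * u r - c r * z i ≤ g * (a i * d r - b i * c r) := by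
      intro i r
      have h1 := (h i r).1
      have h2 := (h i r).2
      nlinarith [mul_le_mul_of_nonneg_left h2 (ha i), mul_le_mul_of_nonneg_left h1 (hc r)]
    intro i j r s
    refine ⟨?_, ?_, ?_, ?_, ?_, ?_⟩
    · intro hbi
      have := hz i
      nlinarith [mul_nonneg hg hbi]
    · intro hbi hbj
      nlinarith [mul_le_mul_of_nonneg_left (hz j) hbi.le,
        mul_le_mul_of_nonpos_left (hz i) hbj.le]
    · intro hP
      have := hQ i r
      nlinarith [mul_nonneg hg (neg_nonneg.mpr hP)]
    · intro hP1 hP2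
      nlinarith [mul_le_mul_of_nonneg_left (hQ i r) hP2.le,
        mul_le_mul_of_nonpos_left (hQ j s) hP1.le]
    · intro hbj hP
      nlinarith [mul_le_mul_of_nonpos_left (hQ i r) hbj.le,
        mul_le_mul_of_nonpos_left (hz j) hP.le, mul_nonneg hg (ha j), ha j,
        mul_le_mul_of_nonpos_left (mul_nonneg hg (ha j)) hP.le]
    · intro hbj hP
      nlinarith [mul_le_mul_of_nonneg_left (hQ i r) hbj.le,
        mul_le_mul_of_nonneg_left (hz j) hP.le, mul_nonneg hg (ha j),
        mul_le_mul_of_nonneg_left (mul_nonneg hg (ha j)) hP.le]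
  · intro hcond
    have c1 : ∀ i, 0 ≤ b i → 0 ≤ z i := fun i => (hcond i i i i).1
    have c2 : ∀ i j, 0 < b i → b j < 0 → b j * z i ≤ b i * z j :=
      fun i j => (hcond i j i i).2.1
    have c3 : ∀ i r, a i * d r - b i * c r ≤ 0 → a i * u r - c r * z i ≤ 0 :=
      fun i r => (hcond i i r r).2.2.1
    have c4 : ∀ i j r s, a i * d r - b i * c r < 0 → 0 < a j * d s - b j * c s →
        (a j * d s - b j * c s) * (a i * u r - c r * z i) ≤
          (a i * d r - b i * c r) * (a j * u s - c s * z j) :=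
      fun i j r s => (hcond i j r s).2.2.2.1
    have c5 : ∀ i j r, b j < 0 → a i * d r - b i * c r < 0 →
        z j * (a i * d r - b i * c r) ≤ b j * (a i * u r - c r * z i) :=
      fun i j r => (hcond i j r r).2.2.2.2.1
    have c6 : ∀ i j r, 0 < b j → 0 < a i * d r - b i * c r →
        b j * (a i * u r - c r * z i) ≤ z j * (a i * d r - b i * c r) :=
      fun i j r => (hcond i j r r).2.2.2.2.2
    set F : Fin k × Fin k → ℝ := fun p =>
      max 0 (max (if b p.1 < 0 then z p.1 / b p.1 else 0)
        (if 0 < a p.1 * d p.2 - b p.1 * c p.2 then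
          (a p.1 * u p.2 - c p.2 * z p.1) / (a p.1 * d p.2 - b p.1 * c p.2) else 0)) with hF
    have hne : (Finset.univ : Finset (Fin k × Fin k)).Nonempty := ⟨(i0, i0), Finset.mem_univ _⟩
    set γ : ℝ := Finset.univ.sup' hne F with hγ
    have hγ0 : 0 ≤ γ := le_trans (le_max_left _ _) (Finset.le_sup' F (Finset.mem_univ (i0, i0)))
    have hγlow1 : ∀ j, b j < 0 → z j / b j ≤ γ := by
      intro j hj
      refine le_trans ?_ (Finset.le_sup' F (Finset.mem_univ (j, j)))
      simp only [hF, if_pos hj]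
      exact le_trans (le_max_left _ _) (le_max_right _ _)
    have hγlow2 : ∀ j s, 0 < a j * d s - b j * c s →
        (a j * u s - c s * z j) / (a j * d s - b j * c s) ≤ γ := by
      intro j s hjs
      refine le_trans ?_ (Finset.le_sup' F (Finset.mem_univ (j, s)))
      simp only [hF, if_pos hjs]
      exact le_trans (le_max_right _ _) (le_max_right _ _)
    have hγup : ∀ U : ℝ, 0 ≤ U → (∀ j, b j < 0 → z j / b j ≤ U) →
        (∀ j s, 0 < a j * d s - b j * c s →
          (a j * u s - c s * z j) / (a j * d s - b j * c s) ≤ U) → γ ≤ U := by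
      intro U h0 h1 h2
      apply Finset.sup'_le
      intro p _
      refine max_le h0 (max_le ?_ ?_)
      · split_ifs with hh
        · exact h1 p.1 hh
        · exact h0
      · split_ifs with hh
        · exact h2 p.1 p.2 hh
        · exact h0
    -- key facts about γ
    have hbz : ∀ i, b i * γ ≤ z i := by
      intro i
      rcases lt_trichotomy (b i) 0 with hb | hb | hb
      · have := hγlow1 i hb
        rw [div_le_iff_of_neg hb] at this
        linarith
      · rw [hb]; simpa using c1 i (le_of_eq hb.symm)
      · have hup : γ ≤ z i / b i := by
          apply hγup
          · exact div_nonneg (c1 i hb.le) hb.le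
          · intro j hj
            exact hdiv1 hj hb (c2 i j hb hj)
          · intro j s hjs
            rw [div_le_div_iff₀ hjs hb]
            nlinarith [c6 j i s hb hjs]
        rw [le_div_iff₀ hb] at hup
        linarith
    have hPQ : ∀ i r, a i * u r - c r * z i ≤ (a i * d r - b i * c r) * γ := by
      intro i r
      rcases lt_trichotomy (a i * d r - b i * c r) 0 with hP | hP | hP
      · have hup : γ ≤ (a i * u r - c r * z i) / (a i * d r - b i * c r) := by
          apply hγup
          · exact div_nonneg_of_nonpos (c3 i r hP.le) hP.le
          · intro j hj
            exact hdiv2 hj hP (by nlinarith [c5 i j r hj hP])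
          · intro j s hjs
            exact hdiv3 hP hjs (by nlinarith [c4 i j r s hP hjs])
        rw [le_div_iff_of_neg hP] at hup
        linarith
      · rw [hP, zero_mul]; exact c3 i r hP.le
      · have := hγlow2 i r hP
        rw [div_le_iff₀ hP] at this
        linarith
    -- construct l
    set T : Finset (Fin k) := Finset.univ.filter (fun i => 0 < a i) with hT
    have hTne : T.Nonempty := ⟨i0, by simp [hT, hi0']⟩
    set l : ℝ := T.inf' hTne (fun i => (z i - b i * γ) / a i) with hldef
    have hl0 : 0 ≤ l := by
      apply Finset.le_inf'
      intro i hi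
      have hai : 0 < a i := by simpa [hT] using hi
      exact div_nonneg (by linarith [hbz i]) hai.le
    obtain ⟨i1, hi1T, hi1⟩ := Finset.exists_mem_eq_inf' hTne (fun i => (z i - b i * γ) / a i)
    have hai1 : 0 < a i1 := by simpa [hT] using hi1T
    have hal : a i1 * l = z i1 - b i1 * γ := by
      rw [hldef, hi1]; field_simp
    refine ⟨l, γ, hl0, hγ0, fun i j => ⟨?_, ?_⟩⟩
    · rcases ((ha i).lt_or_eq) with hai | hai
      · have hli : l ≤ (z i - b i * γ) / a i :=
          Finset.inf'_le _ (by simp [hT, hai])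
        rw [le_div_iff₀ hai] at hli
        linarith
      · have := hbz i
        rw [← hai]
        linarith
    · have h1 := hPQ i1 j
      have hal2 : c j * (a i1 * l) = c j * (z i1 - b i1 * γ) := by rw [hal]
      have h2 : a i1 * u j ≤ a i1 * (l * c j + γ * d j) := by nlinarith [h1, hal2]
      exact le_of_mul_le_mul_left h2 hai1
end

section
/- Let μ be a reduced p×3 interval matrix. Then mrk(μ) ≤ 2 if and only if there exists a matrix A ∈ μ such that either the third column A^{(3)} lies in the linear span of the first two columns A^{(1)}, A^{(2)}, or the second column A^{(2)} lies in the linear span of A^{(1)}, A^{(3)}. -/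
/-!
Reducedness makes the first column of every `A ∈ μ` nonzero. For three vectors `u ≠ 0, v, w`
the span has dimension at most two exactly when `w ∈ span {u, v}` or `v ∈ span {u, w}`:
otherwise `span {u} < span {u, v} < span {u, v, w}` is a strictly increasing chain.
-/

open Submodule Module

theorem Nat.sInf_le_iff {s : Set ℕ} {n : ℕ} (hs : s.Nonempty) :
    sInf s ≤ n ↔ ∃ r ∈ s, r ≤ n :=
  ⟨fun h => ⟨sInf s, Nat.sInf_mem hs, h⟩, fun ⟨_, hr, h⟩ => (Nat.sInf_le hr).trans h⟩

section

variable {K V : Type*} [DivisionRing K] [AddCommGroup V] [Module K V]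

theorem Submodule.span_lt_span_insert {s : Set V} {x : V} (hx : x ∉ span K s) :
    span K s < span K (insert x s) :=
  SetLike.lt_iff_le_and_exists.2
    ⟨span_mono (Set.subset_insert x s), x, subset_span (Set.mem_insert x s), hx⟩

theorem finrank_span_pair_le_two (u v : V) : finrank K (span K {u, v}) ≤ 2 := by
  have := finrank_range_le_card (R := K) ![u, v]
  rwa [Matrix.range_cons_cons_empty, Fintype.card_fin] at this

theorem three_le_finrank_span_triple {u v w : V} (hu : u ≠ 0) (hv : v ∉ span K {u})
    (hw : w ∉ span K {u, v}) : 3 ≤ finrank K (span K {u, v, w}) := by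
  have : FiniteDimensional K (span K {u, v}) := .span_of_finite K (Set.toFinite _)
  have : FiniteDimensional K (span K {u, v, w}) := .span_of_finite K (Set.toFinite _)
  have hvw : span K {u, v} < span K {u, v, w} := by
    rw [Set.pair_comm v w, Set.insert_comm u w]
    exact span_lt_span_insert hw
  have huv : K ∙ u < span K {u, v} := by
    rw [Set.pair_comm]
    exact span_lt_span_insert hv
  have := finrank_lt_finrank_of_lt hvw
  have := finrank_lt_finrank_of_lt huv
  rw [finrank_span_singleton hu] at this
  omega

theorem finrank_span_triple_le_two_iff {u v w : V} (hu : u ≠ 0) :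
    finrank K (span K {u, v, w}) ≤ 2 ↔ w ∈ span K {u, v} ∨ v ∈ span K {u, w} := by
  constructor
  · intro h
    by_contra! hvw
    have hv : v ∉ K ∙ u := fun hv =>
      hvw.2 (span_mono (Set.singleton_subset_iff.2 (Set.mem_insert u {w})) hv)
    have := three_le_finrank_span_triple hu hv hvw.1
    omega
  · rintro (hw | hv)
    · rw [Set.pair_comm v w, Set.insert_comm u w, span_insert_eq_span hw]
      exact finrank_span_pair_le_two u v
    · rw [Set.insert_comm, span_insert_eq_span hv]
      exact finrank_span_pair_le_two u w

end

theorem Set.range_fin_three {α : Type*} (f : Fin 3 → α) : Set.range f = {f 0, f 1, f 2} := by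
  ext x
  simp [Fin.exists_fin_succ, eq_comm]

theorem Matrix.rank_eq_finrank_span_cols_fin_three {R : Type*} [CommRing R] {p : ℕ}
    (A : Matrix (Fin p) (Fin 3) R) :
    A.rank = finrank R (span R {A.col 0, A.col 1, A.col 2}) := by
  rw [A.rank_eq_finrank_span_cols, Set.range_fin_three]

theorem mrk_le_two_iff_span_general (p : ℕ) (m M : Matrix (Fin p) (Fin 3) ℝ)
    (hle : ∀ i j, m i j ≤ M i j)
    (hredcol : ∀ j, ∃ i, ¬ (m i j ≤ 0 ∧ 0 ≤ M i j)) :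
    sInf {r : ℕ | ∃ A : Matrix (Fin p) (Fin 3) ℝ,
        (∀ i j, A i j ∈ Set.Icc (m i j) (M i j)) ∧ A.rank = r} ≤ 2 ↔
      ∃ A : Matrix (Fin p) (Fin 3) ℝ,
        (∀ i j, A i j ∈ Set.Icc (m i j) (M i j)) ∧
          ((fun i => A i 2) ∈
              Submodule.span ℝ ({fun i => A i 0, fun i => A i 1} : Set (Fin p → ℝ)) ∨
            (fun i => A i 1) ∈
              Submodule.span ℝ ({fun i => A i 0, fun i => A i 2} : Set (Fin p → ℝ))) := by
  have rank_le_two_iff {A : Matrix (Fin p) (Fin 3) ℝ}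
      (hA : ∀ i j, A i j ∈ Set.Icc (m i j) (M i j)) :
      A.rank ≤ 2 ↔ A.col 2 ∈ span ℝ {A.col 0, A.col 1} ∨ A.col 1 ∈ span ℝ {A.col 0, A.col 2} := by
    have hcol : A.col 0 ≠ 0 := fun h0 => by
      obtain ⟨i, hi⟩ := hredcol 0
      have hAi : A i 0 = 0 := congrFun h0 i
      exact hi (hAi ▸ hA i 0)
    rw [A.rank_eq_finrank_span_cols_fin_three, finrank_span_triple_le_two_iff hcol]
  rw [Nat.sInf_le_iff]
  · constructor
    · rintro ⟨_, ⟨A, hA, rfl⟩, hrank⟩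
      exact ⟨A, hA, (rank_le_two_iff hA).1 hrank⟩
    · rintro ⟨A, hA, hspan⟩
      exact ⟨A.rank, ⟨A, hA, rfl⟩, (rank_le_two_iff hA).2 hspan⟩
  · exact ⟨m.rank, m, fun i j => ⟨le_rfl, hle i j⟩, rfl⟩

/-- For a reduced p×3 interval matrix μ, mrk(μ) ≤ 2 iff there exists
A ∈ μ whose third column lies in the span of the first two columns, or whose second
column lies in the span of the first and third columns. -/
theorem mrk_le_two_iff_span (p : ℕ) (m M : Matrix (Fin p) (Fin 3) ℝ)
    (hle : ∀ i j, m i j ≤ M i j)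
    (hredrow : ∀ i, ∃ j, ¬ (m i j ≤ 0 ∧ 0 ≤ M i j))
    (hredcol : ∀ j, ∃ i, ¬ (m i j ≤ 0 ∧ 0 ≤ M i j)) :
    sInf {r : ℕ | ∃ A : Matrix (Fin p) (Fin 3) ℝ,
        (∀ i j, A i j ∈ Set.Icc (m i j) (M i j)) ∧ A.rank = r} ≤ 2 ↔
      ∃ A : Matrix (Fin p) (Fin 3) ℝ,
        (∀ i j, A i j ∈ Set.Icc (m i j) (M i j)) ∧
          ((fun i => A i 2) ∈
              Submodule.span ℝ ({fun i => A i 0, fun i => A i 1} : Set (Fin p → ℝ)) ∨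
            (fun i => A i 1) ∈
              Submodule.span ℝ ({fun i => A i 0, fun i => A i 2} : Set (Fin p → ℝ))) :=
  mrk_le_two_iff_span_general p m M hle hredcol
end

section
/- Let μ be a p×3 interval matrix and let (v,w) be (2,3) or (3,2). Then there exists A ∈ μ such that A^{(w)} lies in the linear span of A^{(1)} and A^{(v)} if and only if at least one of the following four conditions holds: (1) there exist λ, γ ≥ 0 such that for all i, j: λm_{i,1} + γm_{i,v} ≤ M_{i,w} and λM_{j,1} + γM_{j,v} ≥ m_{j,w}; (2) there exist λ ≥ 0 and γ ≤ 0 such that for all i, j: λm_{i,1} + γM_{i,v} ≤ M_{i,w} and λM_{j,1} + γm_{j,v} ≥ m_{j,w}; (3) there exist λ ≤ 0 and γ ≥ 0 such that for all i, j: λM_{i,1} + γm_{i,v} ≤ M_{i,w} and λm_{j,1} + γM_{j,v} ≥ m_{j,w}; (4) there exist λ ≤ 0 and γ ≤ 0 such that for all i, j: λM_{i,1} + γM_{i,v} ≤ M_{i,w} and λm_{j,1} + γm_{j,v} ≥ m_{j,w}. -/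
/-- Row-wise solver: find a point on the segment between two feasible combinations. -/
lemma row_solve (l g m0 M0 mv Mv mw Mw x0 X0 xv Xv : ℝ)
    (hw : mw ≤ Mw)
    (hx0 : x0 ∈ Set.Icc m0 M0) (hX0 : X0 ∈ Set.Icc m0 M0)
    (hxv : xv ∈ Set.Icc mv Mv) (hXv : Xv ∈ Set.Icc mv Mv)
    (hlo : l * x0 + g * xv ≤ Mw) (hhi : mw ≤ l * X0 + g * Xv)
    (hmono : l * x0 + g * xv ≤ l * X0 + g * Xv) :
    ∃ a0 av aw : ℝ, a0 ∈ Set.Icc m0 M0 ∧ av ∈ Set.Icc mv Mv ∧ aw ∈ Set.Icc mw Mw ∧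
      l * a0 + g * av = aw := by
  set F0 := l * x0 + g * xv with hF0
  set F1 := l * X0 + g * Xv with hF1
  by_cases h : F1 = F0
  · exact ⟨x0, xv, F0, hx0, hxv, ⟨by linarith, hlo⟩, rfl⟩
  · have hF : F0 < F1 := lt_of_le_of_ne hmono (Ne.symm h)
    set c := max mw F0 with hc
    have hcF0 : F0 ≤ c := le_max_right _ _
    have hcF1 : c ≤ F1 := max_le hhi hmono
    have hcMw : c ≤ Mw := max_le hw hlo
    set t := (c - F0) / (F1 - F0) with ht
    have ht0 : 0 ≤ t := div_nonneg (by linarith) (by linarith)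
    have ht1 : t ≤ 1 := by
      rw [ht, div_le_one (by linarith)]; linarith
    have htmul : t * (F1 - F0) = c - F0 := by
      rw [ht, div_mul_cancel₀ _ (sub_ne_zero.2 h)]
    refine ⟨x0 + t * (X0 - x0), xv + t * (Xv - xv), c, ⟨?_, ?_⟩, ⟨?_, ?_⟩,
      ⟨le_max_left _ _, hcMw⟩, ?_⟩
    · nlinarith [hx0.1, hX0.1]
    · nlinarith [hx0.2, hX0.2]
    · nlinarith [hxv.1, hXv.1]
    · nlinarith [hxv.2, hXv.2]
    · have : l * (x0 + t * (X0 - x0)) + g * (xv + t * (Xv - xv))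
          = F0 + t * (F1 - F0) := by rw [hF0, hF1]; ring
      rw [this, htmul]; ring

/-- Build a feasible matrix from a per-row solvable system. -/
lemma build_matrix (p : ℕ) (m M : Matrix (Fin p) (Fin 3) ℝ)
    (hle : ∀ i j, m i j ≤ M i j)
    (v w : Fin 3) (hvw : (v = 1 ∧ w = 2) ∨ (v = 2 ∧ w = 1)) (l g : ℝ)
    (x0 X0 xv Xv : Fin p → ℝ)
    (hx0 : ∀ i, x0 i ∈ Set.Icc (m i 0) (M i 0))
    (hX0 : ∀ i, X0 i ∈ Set.Icc (m i 0) (M i 0))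
    (hxv : ∀ i, xv i ∈ Set.Icc (m i v) (M i v))
    (hXv : ∀ i, Xv i ∈ Set.Icc (m i v) (M i v))
    (hlo : ∀ i, l * x0 i + g * xv i ≤ M i w)
    (hhi : ∀ i, m i w ≤ l * X0 i + g * Xv i)
    (hmono : ∀ i, l * x0 i + g * xv i ≤ l * X0 i + g * Xv i) :
    ∃ A : Matrix (Fin p) (Fin 3) ℝ,
      (∀ i j, A i j ∈ Set.Icc (m i j) (M i j)) ∧
        (fun i => A i w) ∈
          Submodule.span ℝ ({fun i => A i 0, fun i => A i v} : Set (Fin p → ℝ)) := by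
  have hsol : ∀ i, ∃ a0 av aw : ℝ, a0 ∈ Set.Icc (m i 0) (M i 0) ∧
      av ∈ Set.Icc (m i v) (M i v) ∧ aw ∈ Set.Icc (m i w) (M i w) ∧
      l * a0 + g * av = aw := fun i =>
    row_solve l g (m i 0) (M i 0) (m i v) (M i v) (m i w) (M i w)
      (x0 i) (X0 i) (xv i) (Xv i) (hle i w) (hx0 i) (hX0 i) (hxv i) (hXv i)
      (hlo i) (hhi i) (hmono i)
  choose a0 av aw ha0 hav haw heq using hsol
  classical
  refine ⟨fun i j => if j = 0 then a0 i else if j = v then av i else aw i, ?_, ?_⟩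
  · intro i j
    rcases hvw with ⟨hv, hw'⟩ | ⟨hv, hw'⟩ <;> subst hv <;> subst hw' <;> fin_cases j <;>
      simp_all
  · have hv0 : v ≠ 0 := by rcases hvw with ⟨hv, _⟩ | ⟨hv, _⟩ <;> subst hv <;> decide
    have hw0 : w ≠ 0 := by rcases hvw with ⟨_, hw'⟩ | ⟨_, hw'⟩ <;> subst hw' <;> decide
    have hwv : w ≠ v := by
      rcases hvw with ⟨hv, hw'⟩ | ⟨hv, hw'⟩ <;> subst hv <;> subst hw' <;> decide
    rw [Submodule.mem_span_pair]
    refine ⟨l, g, ?_⟩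
    funext i
    simp only [Pi.add_apply, Pi.smul_apply, smul_eq_mul, if_neg hw0, if_neg hwv,
      if_pos rfl, if_neg hv0]
    exact heq i

/-- For a p×3 interval matrix μ and (v,w) = (2,3) or (3,2) (here 0-indexed:
columns 1,2,3 are indices 0,1,2), there exists A ∈ μ with column w in the span of columns
1 and v iff one of the four sign-constrained linear systems is solvable. -/
theorem span_iff_four_systems (p : ℕ) (m M : Matrix (Fin p) (Fin 3) ℝ)
    (hle : ∀ i j, m i j ≤ M i j)
    (v w : Fin 3) (hvw : (v = 1 ∧ w = 2) ∨ (v = 2 ∧ w = 1)) :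
    (∃ A : Matrix (Fin p) (Fin 3) ℝ,
        (∀ i j, A i j ∈ Set.Icc (m i j) (M i j)) ∧
          (fun i => A i w) ∈
            Submodule.span ℝ ({fun i => A i 0, fun i => A i v} : Set (Fin p → ℝ))) ↔
      ((∃ l g : ℝ, 0 ≤ l ∧ 0 ≤ g ∧
          (∀ i, l * m i 0 + g * m i v ≤ M i w) ∧
          (∀ j, m j w ≤ l * M j 0 + g * M j v)) ∨
        (∃ l g : ℝ, 0 ≤ l ∧ g ≤ 0 ∧
          (∀ i, l * m i 0 + g * M i v ≤ M i w) ∧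
          (∀ j, m j w ≤ l * M j 0 + g * m j v)) ∨
        (∃ l g : ℝ, l ≤ 0 ∧ 0 ≤ g ∧
          (∀ i, l * M i 0 + g * m i v ≤ M i w) ∧
          (∀ j, m j w ≤ l * m j 0 + g * M j v)) ∨
        (∃ l g : ℝ, l ≤ 0 ∧ g ≤ 0 ∧
          (∀ i, l * M i 0 + g * M i v ≤ M i w) ∧
          (∀ j, m j w ≤ l * m j 0 + g * m j v))) := by
  constructor
  · rintro ⟨A, hA, hspan⟩
    rw [Submodule.mem_span_pair] at hspan
    obtain ⟨a, b, hab⟩ := hspan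
    have heq : ∀ i, a * A i 0 + b * A i v = A i w := by
      intro i
      have := congrFun hab i
      simpa using this
    rcases le_total 0 a with ha | ha <;> rcases le_total 0 b with hb | hb
    · refine Or.inl ⟨a, b, ha, hb, fun i => ?_, fun i => ?_⟩
      · have h1 := mul_le_mul_of_nonneg_left (hA i 0).1 ha
        have h2 := mul_le_mul_of_nonneg_left (hA i v).1 hb
        have := heq i; have := (hA i w).2; linarith
      · have h1 := mul_le_mul_of_nonneg_left (hA i 0).2 ha
        have h2 := mul_le_mul_of_nonneg_left (hA i v).2 hb
        have := heq i; have := (hA i w).1; linarith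
    · refine Or.inr (Or.inl ⟨a, b, ha, hb, fun i => ?_, fun i => ?_⟩)
      · have h1 := mul_le_mul_of_nonneg_left (hA i 0).1 ha
        have h2 := mul_le_mul_of_nonpos_left (hA i v).2 hb
        have := heq i; have := (hA i w).2; linarith
      · have h1 := mul_le_mul_of_nonneg_left (hA i 0).2 ha
        have h2 := mul_le_mul_of_nonpos_left (hA i v).1 hb
        have := heq i; have := (hA i w).1; linarith
    · refine Or.inr (Or.inr (Or.inl ⟨a, b, ha, hb, fun i => ?_, fun i => ?_⟩))
      · have h1 := mul_le_mul_of_nonpos_left (hA i 0).2 ha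
        have h2 := mul_le_mul_of_nonneg_left (hA i v).1 hb
        have := heq i; have := (hA i w).2; linarith
      · have h1 := mul_le_mul_of_nonpos_left (hA i 0).1 ha
        have h2 := mul_le_mul_of_nonneg_left (hA i v).2 hb
        have := heq i; have := (hA i w).1; linarith
    · refine Or.inr (Or.inr (Or.inr ⟨a, b, ha, hb, fun i => ?_, fun i => ?_⟩))
      · have h1 := mul_le_mul_of_nonpos_left (hA i 0).2 ha
        have h2 := mul_le_mul_of_nonpos_left (hA i v).2 hb
        have := heq i; have := (hA i w).2; linarith
      · have h1 := mul_le_mul_of_nonpos_left (hA i 0).1 ha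
        have h2 := mul_le_mul_of_nonpos_left (hA i v).1 hb
        have := heq i; have := (hA i w).1; linarith
  · rintro (⟨l, g, hl, hg, hlo, hhi⟩ | ⟨l, g, hl, hg, hlo, hhi⟩ |
      ⟨l, g, hl, hg, hlo, hhi⟩ | ⟨l, g, hl, hg, hlo, hhi⟩)
    · exact build_matrix p m M hle v w hvw l g
        (fun i => m i 0) (fun i => M i 0) (fun i => m i v) (fun i => M i v)
        (fun i => ⟨le_refl _, hle i 0⟩) (fun i => ⟨hle i 0, le_refl _⟩)
        (fun i => ⟨le_refl _, hle i v⟩) (fun i => ⟨hle i v, le_refl _⟩)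
        hlo hhi (fun i => by nlinarith [hle i 0, hle i v])
    · exact build_matrix p m M hle v w hvw l g
        (fun i => m i 0) (fun i => M i 0) (fun i => M i v) (fun i => m i v)
        (fun i => ⟨le_refl _, hle i 0⟩) (fun i => ⟨hle i 0, le_refl _⟩)
        (fun i => ⟨hle i v, le_refl _⟩) (fun i => ⟨le_refl _, hle i v⟩)
        hlo hhi (fun i => by nlinarith [hle i 0, hle i v])
    · exact build_matrix p m M hle v w hvw l g
        (fun i => M i 0) (fun i => m i 0) (fun i => m i v) (fun i => M i v)
        (fun i => ⟨hle i 0, le_refl _⟩) (fun i => ⟨le_refl _, hle i 0⟩)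
        (fun i => ⟨le_refl _, hle i v⟩) (fun i => ⟨hle i v, le_refl _⟩)
        hlo hhi (fun i => by nlinarith [hle i 0, hle i v])
    · exact build_matrix p m M hle v w hvw l g
        (fun i => M i 0) (fun i => m i 0) (fun i => M i v) (fun i => m i v)
        (fun i => ⟨hle i 0, le_refl _⟩) (fun i => ⟨le_refl _, hle i 0⟩)
        (fun i => ⟨hle i v, le_refl _⟩) (fun i => ⟨le_refl _, hle i v⟩)
        hlo hhi (fun i => by nlinarith [hle i 0, hle i v])
end

section
/- Let μ be a p×q interval matrix, let i₀ ≠ k₀ be row indices and let c ∈ ℝ. Let μ' be the interval matrix obtained from μ by replacing, for each j, the entry μ_{i₀,j} = [m_{i₀,j}, M_{i₀,j}] with the interval [m_{i₀,j}, M_{i₀,j}] + c·[m_{k₀,j}, M_{k₀,j}] = [m_{i₀,j} + min{c·m_{k₀,j}, c·M_{k₀,j}}, M_{i₀,j} + max{c·m_{k₀,j}, c·M_{k₀,j}}], all other entries unchanged. Then rkRange(μ) ⊆ rkRange(μ'), i.e. for every A ∈ μ there exists A' ∈ μ' with rank(A') = rank(A). -/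
lemma stdBasisMatrix_mul_apply' {p q : ℕ} (i₀ k₀ : Fin p) (c : ℝ)
    (A : Matrix (Fin p) (Fin q) ℝ) (a : Fin p) (j : Fin q) :
    (Matrix.single i₀ k₀ c * A) a j = if a = i₀ then c * A k₀ j else 0 := by
  rw [Matrix.mul_apply]
  by_cases h : a = i₀
  · subst h
    rw [if_pos rfl, Finset.sum_eq_single k₀]
    · simp [Matrix.single]
    · intro b _ hb
      simp [Matrix.single, Ne.symm hb]
    · simp
  · rw [if_neg h]
    apply Finset.sum_eq_zero
    intro b _
    simp only [Matrix.single, Matrix.of_apply]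
    rw [if_neg (by rintro ⟨rfl, rfl⟩; exact h rfl), zero_mul]

/-- Adding c times row k₀ to row i₀ of an interval matrix (in interval
arithmetic) can only enlarge the rank range: for every A ∈ μ there is A' in the
transformed interval matrix μ' with the same rank. -/
theorem rkRange_subset_row_operation (p q : ℕ) (m M : Matrix (Fin p) (Fin q) ℝ)
    (hle : ∀ i j, m i j ≤ M i j)
    (i₀ k₀ : Fin p) (hik : i₀ ≠ k₀) (c : ℝ) :
    ∀ A : Matrix (Fin p) (Fin q) ℝ,
      (∀ i j, A i j ∈ Set.Icc (m i j) (M i j)) →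
      ∃ A' : Matrix (Fin p) (Fin q) ℝ,
        (∀ i j, A' i j ∈ Set.Icc
          (if i = i₀ then m i j + min (c * m k₀ j) (c * M k₀ j) else m i j)
          (if i = i₀ then M i j + max (c * m k₀ j) (c * M k₀ j) else M i j)) ∧
        A'.rank = A.rank := by
  intro A hA
  refine ⟨Matrix.transvection i₀ k₀ c * A, ?_, ?_⟩
  · intro i j
    by_cases hi : i = i₀
    · subst hi
      have happ : (Matrix.transvection i k₀ c * A) i j = A i j + c * A k₀ j := by
        rw [Matrix.transvection, Matrix.add_mul, Matrix.one_mul, Matrix.add_apply,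
          stdBasisMatrix_mul_apply', if_pos rfl]
      have h1 := (hA i j).1
      have h2 := (hA i j).2
      have hk1 := (hA k₀ j).1
      have hk2 := (hA k₀ j).2
      rw [Set.mem_Icc, happ]
      constructor
      · simp only [if_pos rfl]
        refine add_le_add h1 ?_
        rcases le_total 0 c with hc | hc
        · exact le_trans (min_le_left _ _) (by nlinarith)
        · exact le_trans (min_le_right _ _) (by nlinarith)
      · simp only [if_pos rfl]
        refine add_le_add h2 ?_
        rcases le_total 0 c with hc | hc
        · exact le_trans (by nlinarith) (le_max_right _ _)
        · exact le_trans (by nlinarith) (le_max_left _ _)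
    · have happ : (Matrix.transvection i₀ k₀ c * A) i j = A i j := by
        rw [Matrix.transvection, Matrix.add_mul, Matrix.one_mul, Matrix.add_apply,
          stdBasisMatrix_mul_apply', if_neg hi, add_zero]
      rw [Set.mem_Icc, happ]
      simp only [if_neg hi]
      exact ⟨(hA i j).1, (hA i j).2⟩
  · exact Matrix.rank_mul_eq_right_of_isUnit_det _ _
      (by rw [Matrix.det_transvection_of_ne _ _ hik]; exact isUnit_one)
end
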